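/- arXiv:2210.01938 — 11 statements merged into one kernel-verified Lean document; each statement's English description precedes it below -/
import Mathlib

section
/- Lee's trimming proportion: Under random assignment (D independent of (S0, S1)), monotone sample selection (S1 ≥ S0 pointwise), and P(S = 1 | D = 1) > 0, the conditional probability P(S0 = 1, S1 = 1 | S1 = 1) equals P(S = 1 | D = 0)/P(S = 1 | D = 1), where S = S1·D + S0·(1−D). -/
open MeasureTheory ProbabilityTheory

noncomputable def condP {Ω : Type*} [MeasurableSpace Ω] (μ : Measure Ω) (A B : Set Ω) : ℝ :=
  (μ (B ∩ A)).toReal / (μ A).toReal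

theorem stmt2 {Ω : Type*} [MeasurableSpace Ω] (μ : Measure Ω) [IsProbabilityMeasure μ]
    (D S0 S1 : Ω → ℝ)
    (hDm : Measurable D) (hDb : ∀ ω, D ω = 0 ∨ D ω = 1)
    (hS0m : Measurable S0) (hS0b : ∀ ω, S0 ω = 0 ∨ S0 ω = 1)
    (hS1m : Measurable S1) (hS1b : ∀ ω, S1 ω = 0 ∨ S1 ω = 1)
    (hindep : IndepFun D (fun ω => (S0 ω, S1 ω)) μ)
    (hmono : ∀ ω, S0 ω ≤ S1 ω)
    (hD0 : 0 < (μ {ω | D ω = 1}).toReal) (hD1 : (μ {ω | D ω = 1}).toReal < 1)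
    (hS1pos : 0 < (μ {ω | S1 ω = 1}).toReal)
    (hSD1 : 0 < condP μ {ω | D ω = 1} {ω | (fun ω => S1 ω * D ω + S0 ω * (1 - D ω)) ω = 1}) :
    condP μ {ω | S1 ω = 1} {ω | S0 ω = 1 ∧ S1 ω = 1}
      = condP μ {ω | D ω = 0} {ω | (fun ω => S1 ω * D ω + S0 ω * (1 - D ω)) ω = 1}
        / condP μ {ω | D ω = 1} {ω | (fun ω => S1 ω * D ω + S0 ω * (1 - D ω)) ω = 1} := by
  classical
  set g : Ω → ℝ × ℝ := fun ω => (S0 ω, S1 ω) with hg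
  -- S0 = 1 implies S1 = 1
  have h01 : ∀ ω, S0 ω = 1 → S1 ω = 1 := by
    intro ω h
    rcases hS1b ω with h1 | h1
    · exfalso; have := hmono ω; rw [h, h1] at this; linarith
    · exact h1
  -- set identities
  have eq1 : {ω | (fun ω => S1 ω * D ω + S0 ω * (1 - D ω)) ω = 1} ∩ {ω | D ω = 1}
      = D ⁻¹' {(1:ℝ)} ∩ g ⁻¹' (Set.univ ×ˢ {(1:ℝ)}) := by
    ext ω
    rcases hDb ω with h | h <;>
      simp [h, Set.mem_setOf_eq, hg, eq_comm]
  have eq2 : {ω | (fun ω => S1 ω * D ω + S0 ω * (1 - D ω)) ω = 1} ∩ {ω | D ω = 0}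
      = D ⁻¹' {(0:ℝ)} ∩ g ⁻¹' ({(1:ℝ)} ×ˢ Set.univ) := by
    ext ω
    rcases hDb ω with h | h <;>
      simp [h, Set.mem_setOf_eq, hg, eq_comm]
  have eq3 : {ω | S0 ω = 1 ∧ S1 ω = 1} ∩ {ω | S1 ω = 1} = {ω | S0 ω = 1} := by
    ext ω
    simp only [Set.mem_inter_iff, Set.mem_setOf_eq]
    constructor
    · rintro ⟨⟨h, _⟩, _⟩; exact h
    · intro h; exact ⟨⟨h, h01 ω h⟩, h01 ω h⟩
  have hgm : Measurable g := hS0m.prodMk hS1m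
  -- independence facts
  have ind1 : μ (D ⁻¹' {(1:ℝ)} ∩ g ⁻¹' (Set.univ ×ˢ {(1:ℝ)}))
      = μ (D ⁻¹' {(1:ℝ)}) * μ (g ⁻¹' (Set.univ ×ˢ {(1:ℝ)})) :=
    hindep.measure_inter_preimage_eq_mul _ _ (measurableSet_singleton _)
      (MeasurableSet.univ.prod (measurableSet_singleton _))
  have ind2 : μ (D ⁻¹' {(0:ℝ)} ∩ g ⁻¹' ({(1:ℝ)} ×ˢ Set.univ))
      = μ (D ⁻¹' {(0:ℝ)}) * μ (g ⁻¹' ({(1:ℝ)} ×ˢ Set.univ)) :=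
    hindep.measure_inter_preimage_eq_mul _ _ (measurableSet_singleton _)
      ((measurableSet_singleton _).prod MeasurableSet.univ)
  have hgS1 : g ⁻¹' (Set.univ ×ˢ {(1:ℝ)}) = {ω | S1 ω = 1} := by
    ext ω; simp [hg, eq_comm]
  have hgS0 : g ⁻¹' ({(1:ℝ)} ×ˢ Set.univ) = {ω | S0 ω = 1} := by
    ext ω; simp [hg, eq_comm]
  have hD1set : D ⁻¹' {(1:ℝ)} = {ω | D ω = 1} := by ext ω; simp
  have hD0set : D ⁻¹' {(0:ℝ)} = {ω | D ω = 0} := by ext ω; simp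
  -- finiteness
  have hfin : ∀ s : Set Ω, μ s ≠ ⊤ := fun s => measure_ne_top μ s
  have hDpos : (μ {ω | D ω = 1}).toReal ≠ 0 := ne_of_gt hD0
  have hD0pos : 0 < (μ {ω | D ω = 0}).toReal := by
    by_contra h
    push_neg at h
    have h0 : (μ {ω | D ω = 0}).toReal = 0 :=
      le_antisymm h ENNReal.toReal_nonneg
    have hunion : {ω | D ω = 0} ∪ {ω | D ω = 1} = Set.univ := by
      ext ω; simpa using hDb ω
    have : (μ Set.univ) ≤ μ {ω | D ω = 0} + μ {ω | D ω = 1} := by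
      rw [← hunion]; exact measure_union_le _ _
    have h1 : (1:ENNReal) ≤ μ {ω | D ω = 0} + μ {ω | D ω = 1} := by
      simpa using this
    have h2 : (1:ℝ) ≤ (μ {ω | D ω = 0}).toReal + (μ {ω | D ω = 1}).toReal := by
      have := ENNReal.toReal_mono (by
        exact ENNReal.add_ne_top.mpr ⟨hfin _, hfin _⟩) h1
      simpa [ENNReal.toReal_add (hfin _) (hfin _)] using this
    rw [h0] at h2
    linarith
  have hD0pos' : (μ {ω | D ω = 0}).toReal ≠ 0 := ne_of_gt hD0pos
  -- compute both cond probs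
  have c1 : condP μ {ω | D ω = 1} {ω | (fun ω => S1 ω * D ω + S0 ω * (1 - D ω)) ω = 1}
      = (μ {ω | S1 ω = 1}).toReal := by
    unfold condP
    rw [eq1, ind1, hgS1, hD1set, ENNReal.toReal_mul, mul_comm,
      mul_div_assoc, div_self hDpos, mul_one]
  have c2 : condP μ {ω | D ω = 0} {ω | (fun ω => S1 ω * D ω + S0 ω * (1 - D ω)) ω = 1}
      = (μ {ω | S0 ω = 1}).toReal := by
    unfold condP
    rw [eq2, ind2, hgS0, hD0set, ENNReal.toReal_mul, mul_comm,
      mul_div_assoc, div_self hD0pos', mul_one]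
  have c3 : condP μ {ω | S1 ω = 1} {ω | S0 ω = 1 ∧ S1 ω = 1}
      = (μ {ω | S0 ω = 1}).toReal / (μ {ω | S1 ω = 1}).toReal := by
    unfold condP
    rw [eq3]
  rw [c1, c2, c3]
end

section
/- Identification of the untreated outcome distribution for the always-observed: Under random assignment (D independent of (Y0, Y1, S0, S1)), monotone sample selection (S1 ≥ S0), 0 < P(D = 1) < 1, and P(S0 = 1) > 0, it holds that P(Y0 = 0 | S0 = 1, S1 = 1) = P(Y = 0 | S = 1, D = 0), where S = S1·D + S0·(1−D) and Y = (Y1·D + Y0·(1−D))·S. -/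
open MeasureTheory ProbabilityTheory

theorem stmt3 {Ω : Type*} [MeasurableSpace Ω] (μ : Measure Ω) [IsProbabilityMeasure μ]
    (Y0 Y1 D S0 S1 : Ω → ℝ)
    (hY0m : Measurable Y0) (hY0b : ∀ ω, Y0 ω = 0 ∨ Y0 ω = 1)
    (hY1m : Measurable Y1) (hY1b : ∀ ω, Y1 ω = 0 ∨ Y1 ω = 1)
    (hDm : Measurable D) (hDb : ∀ ω, D ω = 0 ∨ D ω = 1)
    (hS0m : Measurable S0) (hS0b : ∀ ω, S0 ω = 0 ∨ S0 ω = 1)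
    (hS1m : Measurable S1) (hS1b : ∀ ω, S1 ω = 0 ∨ S1 ω = 1)
    (hindep : IndepFun D (fun ω => (Y0 ω, Y1 ω, S0 ω, S1 ω)) μ)
    (hmono : ∀ ω, S0 ω ≤ S1 ω)
    (hD0 : 0 < (μ {ω | D ω = 1}).toReal) (hD1 : (μ {ω | D ω = 1}).toReal < 1)
    (hS0pos : 0 < (μ {ω | S0 ω = 1}).toReal) :
    condP μ {ω | S0 ω = 1 ∧ S1 ω = 1} {ω | Y0 ω = 0}
      = condP μ {ω | (fun ω => S1 ω * D ω + S0 ω * (1 - D ω)) ω = 1 ∧ D ω = 0} {ω | (fun ω => (Y1 ω * D ω + Y0 ω * (1 - D ω)) * (S1 ω * D ω + S0 ω * (1 - D ω))) ω = 0} := by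
  classical
  set g : Ω → ℝ × ℝ × ℝ × ℝ := fun ω => (Y0 ω, Y1 ω, S0 ω, S1 ω) with hg
  have hgm : Measurable g := hY0m.prodMk (hY1m.prodMk (hS0m.prodMk hS1m))
  set T1 : Set (ℝ × ℝ × ℝ × ℝ) := {p | p.1 = 0 ∧ p.2.2.1 = 1} with hT1
  set T2 : Set (ℝ × ℝ × ℝ × ℝ) := {p | p.2.2.1 = 1} with hT2
  have hT1m : MeasurableSet T1 := by
    have : T1 = (fun p : ℝ × ℝ × ℝ × ℝ => p.1) ⁻¹' {0} ∩ (fun p : ℝ × ℝ × ℝ × ℝ => p.2.2.1) ⁻¹' {1} := by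
      ext p; simp [hT1]
    rw [this]
    exact (measurable_fst (measurableSet_singleton 0)).inter
      ((measurable_fst.comp (measurable_snd.comp measurable_snd)) (measurableSet_singleton 1))
  have hT2m : MeasurableSet T2 := by
    have : T2 = (fun p : ℝ × ℝ × ℝ × ℝ => p.2.2.1) ⁻¹' {1} := by ext p; simp [hT2]
    rw [this]
    exact (measurable_fst.comp (measurable_snd.comp measurable_snd)) (measurableSet_singleton 1)
  have hDset : MeasurableSet (D ⁻¹' {(0:ℝ)}) := hDm (measurableSet_singleton 0)
  -- independence products
  have h1 : μ (D ⁻¹' {(0:ℝ)} ∩ g ⁻¹' T1) = μ (D ⁻¹' {(0:ℝ)}) * μ (g ⁻¹' T1) :=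
    hindep.measure_inter_preimage_eq_mul {(0:ℝ)} T1 (measurableSet_singleton 0) hT1m
  have h2 : μ (D ⁻¹' {(0:ℝ)} ∩ g ⁻¹' T2) = μ (D ⁻¹' {(0:ℝ)}) * μ (g ⁻¹' T2) :=
    hindep.measure_inter_preimage_eq_mul {(0:ℝ)} T2 (measurableSet_singleton 0) hT2m
  -- set identities
  have eA : {ω | S0 ω = 1 ∧ S1 ω = 1} = {ω | S0 ω = 1} := by
    ext ω
    simp only [Set.mem_setOf_eq]
    constructor
    · rintro ⟨h, _⟩; exact h
    · intro h
      refine ⟨h, ?_⟩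
      rcases hS1b ω with h1 | h1
      · exfalso; have := hmono ω; rw [h, h1] at this; linarith
      · exact h1
  have eB : {ω | Y0 ω = 0} ∩ {ω | S0 ω = 1} = g ⁻¹' T1 := by
    ext ω; simp [hT1, hg, Set.mem_setOf_eq]
  have eC : {ω | S0 ω = 1} = g ⁻¹' T2 := by
    ext ω; simp [hT2, hg, Set.mem_setOf_eq]
  have eA' : {ω | (fun ω => S1 ω * D ω + S0 ω * (1 - D ω)) ω = 1 ∧ D ω = 0}
      = D ⁻¹' {(0:ℝ)} ∩ g ⁻¹' T2 := by
    ext ω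
    simp only [Set.mem_setOf_eq, Set.mem_inter_iff, Set.mem_preimage, Set.mem_singleton_iff,
      hT2, hg]
    constructor
    · rintro ⟨h1, h2⟩
      rw [h2] at h1
      exact ⟨h2, by linarith⟩
    · rintro ⟨h2, h1⟩
      exact ⟨by simp [h2]; linarith, h2⟩
  have eB' : {ω | (fun ω => (Y1 ω * D ω + Y0 ω * (1 - D ω)) * (S1 ω * D ω + S0 ω * (1 - D ω))) ω = 0}
      ∩ {ω | (fun ω => S1 ω * D ω + S0 ω * (1 - D ω)) ω = 1 ∧ D ω = 0}
      = D ⁻¹' {(0:ℝ)} ∩ g ⁻¹' T1 := by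
    ext ω
    simp only [Set.mem_setOf_eq, Set.mem_inter_iff, Set.mem_preimage, Set.mem_singleton_iff,
      hT1, hg]
    constructor
    · rintro ⟨hy, h1, h2⟩
      rw [h2] at hy h1
      have hs0 : S0 ω = 1 := by linarith
      rw [hs0] at hy
      have hy0 : Y0 ω = 0 := by nlinarith
      exact ⟨h2, hy0, hs0⟩
    · rintro ⟨h2, hy0, hs0⟩
      exact ⟨by simp [h2, hy0, hs0], ⟨by simp [h2, hs0], h2⟩⟩
  -- positivity of μ {D = 0}
  have hDc : D ⁻¹' {(0:ℝ)} = {ω | D ω = 1}ᶜ := by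
    ext ω
    simp only [Set.mem_preimage, Set.mem_singleton_iff, Set.mem_compl_iff, Set.mem_setOf_eq]
    rcases hDb ω with h | h <;> simp [h]
  have hD1set : MeasurableSet {ω | D ω = 1} := hDm (measurableSet_singleton 1)
  have hcpos : 0 < (μ (D ⁻¹' {(0:ℝ)})).toReal := by
    rw [hDc, measure_compl hD1set (measure_ne_top μ _), measure_univ]
    rw [ENNReal.toReal_sub_of_le prob_le_one ENNReal.one_ne_top]
    simp only [ENNReal.toReal_one]
    linarith
  -- put it together
  rw [condP, condP, eA, eB, eC, eB', eA', h1, h2, ENNReal.toReal_mul, ENNReal.toReal_mul]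
  rw [mul_div_mul_left _ _ (ne_of_gt hcpos)]
end

section
/- Testable restriction on the uncensored outcome: Under random assignment (D independent of (Y0, Y1, S0, S1)), monotone sample selection (S1 ≥ S0), monotone treatment response (Y1 ≥ Y0), and 0 < P(D = 1) < 1, we have P(Y = 1 | D = 1) − P(Y = 1 | D = 0) ≥ 0, where Y = (Y1·D + Y0·(1−D))·(S1·D + S0·(1−D)). -/
open MeasureTheory ProbabilityTheory

theorem stmt5 {Ω : Type*} [MeasurableSpace Ω] (μ : Measure Ω) [IsProbabilityMeasure μ]
    (Y0 Y1 D S0 S1 : Ω → ℝ)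
    (hY0m : Measurable Y0) (hY0b : ∀ ω, Y0 ω = 0 ∨ Y0 ω = 1)
    (hY1m : Measurable Y1) (hY1b : ∀ ω, Y1 ω = 0 ∨ Y1 ω = 1)
    (hDm : Measurable D) (hDb : ∀ ω, D ω = 0 ∨ D ω = 1)
    (hS0m : Measurable S0) (hS0b : ∀ ω, S0 ω = 0 ∨ S0 ω = 1)
    (hS1m : Measurable S1) (hS1b : ∀ ω, S1 ω = 0 ∨ S1 ω = 1)
    (hindep : IndepFun D (fun ω => (Y0 ω, Y1 ω, S0 ω, S1 ω)) μ)
    (hmonoS : ∀ ω, S0 ω ≤ S1 ω) (hmonoY : ∀ ω, Y0 ω ≤ Y1 ω)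
    (hD0 : 0 < (μ {ω | D ω = 1}).toReal) (hD1 : (μ {ω | D ω = 1}).toReal < 1) :
    condP μ {ω | D ω = 1} {ω | (fun ω => (Y1 ω * D ω + Y0 ω * (1 - D ω)) * (S1 ω * D ω + S0 ω * (1 - D ω))) ω = 1}
      - condP μ {ω | D ω = 0} {ω | (fun ω => (Y1 ω * D ω + Y0 ω * (1 - D ω)) * (S1 ω * D ω + S0 ω * (1 - D ω))) ω = 1} ≥ 0 := by
  set f : Ω → ℝ × ℝ × ℝ × ℝ := fun ω => (Y0 ω, Y1 ω, S0 ω, S1 ω) with hf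
  set A1 : Set Ω := {ω | Y1 ω * S1 ω = 1} with hA1
  set A0 : Set Ω := {ω | Y0 ω * S0 ω = 1} with hA0
  have hfm : Measurable f := (hY0m.prodMk (hY1m.prodMk (hS0m.prodMk hS1m)))
  -- rewrite intersections
  have hI1 : {ω | (fun ω => (Y1 ω * D ω + Y0 ω * (1 - D ω)) * (S1 ω * D ω + S0 ω * (1 - D ω))) ω = 1}
      ∩ {ω | D ω = 1} = A1 ∩ {ω | D ω = 1} := by
    ext ω
    simp only [Set.mem_inter_iff, Set.mem_setOf_eq, hA1]
    constructor
    · rintro ⟨h, hd⟩; refine ⟨?_, hd⟩; rw [hd] at h; nlinarith [h]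
    · rintro ⟨h, hd⟩; refine ⟨?_, hd⟩; rw [hd]; nlinarith [h]
  have hI0 : {ω | (fun ω => (Y1 ω * D ω + Y0 ω * (1 - D ω)) * (S1 ω * D ω + S0 ω * (1 - D ω))) ω = 1}
      ∩ {ω | D ω = 0} = A0 ∩ {ω | D ω = 0} := by
    ext ω
    simp only [Set.mem_inter_iff, Set.mem_setOf_eq, hA0]
    constructor
    · rintro ⟨h, hd⟩; refine ⟨?_, hd⟩; rw [hd] at h; nlinarith [h]
    · rintro ⟨h, hd⟩; refine ⟨?_, hd⟩; rw [hd]; nlinarith [h]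
  -- independence
  have hset1 : A1 = f ⁻¹' {p : ℝ × ℝ × ℝ × ℝ | p.2.1 * p.2.2.2 = 1} := rfl
  have hset0 : A0 = f ⁻¹' {p : ℝ × ℝ × ℝ × ℝ | p.1 * p.2.2.1 = 1} := rfl
  have hms1 : MeasurableSet {p : ℝ × ℝ × ℝ × ℝ | p.2.1 * p.2.2.2 = 1} := by
    have : Measurable fun p : ℝ × ℝ × ℝ × ℝ => p.2.1 * p.2.2.2 :=
      measurable_snd.fst.mul measurable_snd.snd.snd
    exact this (measurableSet_singleton 1)
  have hms0 : MeasurableSet {p : ℝ × ℝ × ℝ × ℝ | p.1 * p.2.2.1 = 1} := by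
    have : Measurable fun p : ℝ × ℝ × ℝ × ℝ => p.1 * p.2.2.1 :=
      measurable_fst.mul measurable_snd.snd.fst
    exact this (measurableSet_singleton 1)
  have hd1 : {ω | D ω = 1} = D ⁻¹' {(1 : ℝ)} := rfl
  have hd0 : {ω | D ω = 0} = D ⁻¹' {(0 : ℝ)} := rfl
  have hmul1 : μ (A1 ∩ {ω | D ω = 1}) = μ A1 * μ {ω | D ω = 1} := by
    rw [Set.inter_comm, hset1, hd1,
      hindep.measure_inter_preimage_eq_mul _ _ (measurableSet_singleton 1) hms1, mul_comm]
  have hmul0 : μ (A0 ∩ {ω | D ω = 0}) = μ A0 * μ {ω | D ω = 0} := by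
    rw [Set.inter_comm, hset0, hd0,
      hindep.measure_inter_preimage_eq_mul _ _ (measurableSet_singleton 0) hms0, mul_comm]
  have hD0' : (μ {ω | D ω = 1}).toReal ≠ 0 := ne_of_gt hD0
  -- μ {D = 0} > 0
  have hcompl : {ω | D ω = 0} = {ω | D ω = 1}ᶜ := by
    ext ω; simp only [Set.mem_setOf_eq, Set.mem_compl_iff]
    rcases hDb ω with h | h <;> simp [h]
  have hD1ms : MeasurableSet {ω | D ω = 1} := hDm (measurableSet_singleton 1)
  have hD0val : (μ {ω | D ω = 0}).toReal = 1 - (μ {ω | D ω = 1}).toReal := by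
    rw [hcompl, measure_compl hD1ms (measure_ne_top μ _), measure_univ,
      ENNReal.toReal_sub_of_le prob_le_one ENNReal.one_ne_top, ENNReal.toReal_one]
  have hD0pos : 0 < (μ {ω | D ω = 0}).toReal := by rw [hD0val]; linarith
  -- compute condP values
  have hc1 : condP μ {ω | D ω = 1}
      {ω | (fun ω => (Y1 ω * D ω + Y0 ω * (1 - D ω)) * (S1 ω * D ω + S0 ω * (1 - D ω))) ω = 1}
      = (μ A1).toReal := by
    rw [condP, hI1, hmul1, ENNReal.toReal_mul, mul_div_assoc, div_self hD0', mul_one]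
  have hc0 : condP μ {ω | D ω = 0}
      {ω | (fun ω => (Y1 ω * D ω + Y0 ω * (1 - D ω)) * (S1 ω * D ω + S0 ω * (1 - D ω))) ω = 1}
      = (μ A0).toReal := by
    rw [condP, hI0, hmul0, ENNReal.toReal_mul, mul_div_assoc, div_self (ne_of_gt hD0pos), mul_one]
  rw [hc1, hc0]
  have hsub : A0 ⊆ A1 := by
    intro ω hω
    simp only [hA0, Set.mem_setOf_eq] at hω
    simp only [hA1, Set.mem_setOf_eq]
    have hY0 : Y0 ω = 1 := by
      rcases hY0b ω with h | h
      · rw [h] at hω; simp at hω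
      · exact h
    have hS0 : S0 ω = 1 := by
      rcases hS0b ω with h | h
      · rw [h, mul_zero] at hω; norm_num at hω
      · exact h
    have hY1 : Y1 ω = 1 := by
      rcases hY1b ω with h | h
      · have := hmonoY ω; rw [h, hY0] at this; linarith
      · exact h
    have hS1 : S1 ω = 1 := by
      rcases hS1b ω with h | h
      · have := hmonoS ω; rw [h, hS0] at this; linarith
      · exact h
    rw [hY1, hS1]; ring
  have := ENNReal.toReal_mono (measure_ne_top μ A1) (measure_mono hsub)
  linarith
end

section
/- Horowitz–Manski trimming bounds: Under random assignment (D independent of (Y0, Y1, S0, S1)), P(D = 1) > 0, P(S1 = 1) > 0, and P(S0 = 1, S1 = 1) > 0, the quantity P(Y1 = 1 | S0 = 1, S1 = 1) is bounded below by [P(Y = 1 | S = 1, D = 1) − (1 − q)]/q and above by P(Y = 1 | S = 1, D = 1)/q, where q = P(S0 = 1, S1 = 1 | S1 = 1), S = S1·D + S0·(1−D), and Y = (Y1·D + Y0·(1−D))·S. -/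
open MeasureTheory ProbabilityTheory

theorem stmt6 {Ω : Type*} [MeasurableSpace Ω] (μ : Measure Ω) [IsProbabilityMeasure μ]
    (Y0 Y1 D S0 S1 : Ω → ℝ)
    (hY0m : Measurable Y0) (hY0b : ∀ ω, Y0 ω = 0 ∨ Y0 ω = 1)
    (hY1m : Measurable Y1) (hY1b : ∀ ω, Y1 ω = 0 ∨ Y1 ω = 1)
    (hDm : Measurable D) (hDb : ∀ ω, D ω = 0 ∨ D ω = 1)
    (hS0m : Measurable S0) (hS0b : ∀ ω, S0 ω = 0 ∨ S0 ω = 1)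
    (hS1m : Measurable S1) (hS1b : ∀ ω, S1 ω = 0 ∨ S1 ω = 1)
    (hindep : IndepFun D (fun ω => (Y0 ω, Y1 ω, S0 ω, S1 ω)) μ)
    (hD0 : 0 < (μ {ω | D ω = 1}).toReal)
    (hS1pos : 0 < (μ {ω | S1 ω = 1}).toReal)
    (hSSpos : 0 < (μ {ω | S0 ω = 1 ∧ S1 ω = 1}).toReal) :
    (condP μ {ω | (fun ω => S1 ω * D ω + S0 ω * (1 - D ω)) ω = 1 ∧ D ω = 1} {ω | (fun ω => (Y1 ω * D ω + Y0 ω * (1 - D ω)) * (S1 ω * D ω + S0 ω * (1 - D ω))) ω = 1}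
        - (1 - condP μ {ω | S1 ω = 1} {ω | S0 ω = 1 ∧ S1 ω = 1}))
      / condP μ {ω | S1 ω = 1} {ω | S0 ω = 1 ∧ S1 ω = 1}
      ≤ condP μ {ω | S0 ω = 1 ∧ S1 ω = 1} {ω | Y1 ω = 1}
    ∧ condP μ {ω | S0 ω = 1 ∧ S1 ω = 1} {ω | Y1 ω = 1}
      ≤ condP μ {ω | (fun ω => S1 ω * D ω + S0 ω * (1 - D ω)) ω = 1 ∧ D ω = 1} {ω | (fun ω => (Y1 ω * D ω + Y0 ω * (1 - D ω)) * (S1 ω * D ω + S0 ω * (1 - D ω))) ω = 1}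
        / condP μ {ω | S1 ω = 1} {ω | S0 ω = 1 ∧ S1 ω = 1} := by
  classical
  set g : Ω → ℝ × ℝ × ℝ × ℝ := fun ω => (Y0 ω, Y1 ω, S0 ω, S1 ω) with hg
  -- Set identities
  have e1 : {ω | (fun ω => S1 ω * D ω + S0 ω * (1 - D ω)) ω = 1 ∧ D ω = 1}
      = {ω | S1 ω = 1 ∧ D ω = 1} := by
    ext ω
    simp only [Set.mem_setOf_eq]
    constructor
    · rintro ⟨h1, h2⟩
      rw [h2] at h1; norm_num at h1; exact ⟨h1, h2⟩
    · rintro ⟨h1, h2⟩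
      rw [h2, h1]; norm_num
  have e2 : {ω | (fun ω => (Y1 ω * D ω + Y0 ω * (1 - D ω)) * (S1 ω * D ω + S0 ω * (1 - D ω))) ω = 1}
      ∩ {ω | S1 ω = 1 ∧ D ω = 1}
      = {ω | (Y1 ω = 1 ∧ S1 ω = 1) ∧ D ω = 1} := by
    ext ω
    simp only [Set.mem_inter_iff, Set.mem_setOf_eq]
    constructor
    · rintro ⟨h1, hS, hD⟩
      rw [hD, hS] at h1; norm_num at h1
      exact ⟨⟨h1, hS⟩, hD⟩
    · rintro ⟨⟨hY, hS⟩, hD⟩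
      refine ⟨?_, hS, hD⟩
      rw [hD, hS, hY]; norm_num
  -- Independence consequences
  have key : ∀ t : Set (ℝ × ℝ × ℝ × ℝ), MeasurableSet t →
      μ (D ⁻¹' {1} ∩ g ⁻¹' t) = μ (D ⁻¹' {1}) * μ (g ⁻¹' t) := fun t ht =>
    hindep.measure_inter_preimage_eq_mul {1} t (measurableSet_singleton 1) ht
  have sA : {ω | Y1 ω = 1 ∧ S1 ω = 1} = g ⁻¹' {p | p.2.1 = 1 ∧ p.2.2.2 = 1} := by
    ext ω; simp [hg]
  have sC : {ω | S1 ω = 1} = g ⁻¹' {p | p.2.2.2 = 1} := by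
    ext ω; simp [hg]
  have mA : MeasurableSet {p : ℝ × ℝ × ℝ × ℝ | p.2.1 = 1 ∧ p.2.2.2 = 1} := by
    have : {p : ℝ × ℝ × ℝ × ℝ | p.2.1 = 1 ∧ p.2.2.2 = 1}
        = (fun p : ℝ × ℝ × ℝ × ℝ => p.2.1) ⁻¹' {1} ∩ (fun p : ℝ × ℝ × ℝ × ℝ => p.2.2.2) ⁻¹' {1} := by
      ext p; simp [Set.mem_inter_iff]
    rw [this]
    exact ((measurable_fst.comp measurable_snd) (measurableSet_singleton 1)).inter
      ((measurable_snd.comp (measurable_snd.comp measurable_snd)) (measurableSet_singleton 1))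
  have mC : MeasurableSet {p : ℝ × ℝ × ℝ × ℝ | p.2.2.2 = 1} :=
    (measurable_snd.comp (measurable_snd.comp measurable_snd)) (measurableSet_singleton 1)
  have iD1 : {ω | D ω = 1} = D ⁻¹' {1} := rfl
  have i1 : μ {ω | (Y1 ω = 1 ∧ S1 ω = 1) ∧ D ω = 1}
      = μ {ω | D ω = 1} * μ {ω | Y1 ω = 1 ∧ S1 ω = 1} := by
    have : {ω | (Y1 ω = 1 ∧ S1 ω = 1) ∧ D ω = 1}
        = D ⁻¹' {1} ∩ g ⁻¹' {p | p.2.1 = 1 ∧ p.2.2.2 = 1} := by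
      rw [← sA, ← iD1]; ext ω; simp [Set.mem_inter_iff]; tauto
    rw [this, key _ mA, ← sA, ← iD1]
  have i2 : μ {ω | S1 ω = 1 ∧ D ω = 1}
      = μ {ω | D ω = 1} * μ {ω | S1 ω = 1} := by
    have : {ω | S1 ω = 1 ∧ D ω = 1} = D ⁻¹' {1} ∩ g ⁻¹' {p | p.2.2.2 = 1} := by
      rw [← sC, ← iD1]; ext ω; simp [Set.mem_inter_iff]; tauto
    rw [this, key _ mC, ← sC, ← iD1]
  -- Real numbers
  set d : ℝ := (μ {ω | D ω = 1}).toReal with hd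
  set a : ℝ := (μ {ω | Y1 ω = 1 ∧ S1 ω = 1}).toReal with ha
  set b : ℝ := (μ ({ω | Y1 ω = 1} ∩ {ω | S0 ω = 1 ∧ S1 ω = 1})).toReal with hb
  set c : ℝ := (μ {ω | S0 ω = 1 ∧ S1 ω = 1}).toReal with hc
  set s1 : ℝ := (μ {ω | S1 ω = 1}).toReal with hs1
  -- compute condP values
  have cp1 : condP μ {ω | (fun ω => S1 ω * D ω + S0 ω * (1 - D ω)) ω = 1 ∧ D ω = 1}
      {ω | (fun ω => (Y1 ω * D ω + Y0 ω * (1 - D ω)) * (S1 ω * D ω + S0 ω * (1 - D ω))) ω = 1}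
      = a / s1 := by
    rw [condP, e1, e2, i1, i2, ENNReal.toReal_mul, ENNReal.toReal_mul, ← hd, ← ha, ← hs1,
      mul_div_mul_left _ _ (ne_of_gt hD0)]
  have cp2 : condP μ {ω | S1 ω = 1} {ω | S0 ω = 1 ∧ S1 ω = 1} = c / s1 := by
    rw [condP]
    have : {ω | S0 ω = 1 ∧ S1 ω = 1} ∩ {ω | S1 ω = 1} = {ω | S0 ω = 1 ∧ S1 ω = 1} :=
      Set.inter_eq_left.mpr fun ω h => h.2
    rw [this]
  have cp3 : condP μ {ω | S0 ω = 1 ∧ S1 ω = 1} {ω | Y1 ω = 1} = b / c := rfl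
  rw [cp1, cp2, cp3]
  -- measure inequalities
  have fin : ∀ s : Set Ω, μ s ≠ ⊤ := fun s => measure_ne_top μ s
  have hba : b ≤ a := by
    rw [hb, ha]
    refine ENNReal.toReal_le_toReal (fin _) (fin _) |>.mpr ?_
    apply measure_mono
    rintro ω ⟨h1, h2, h3⟩
    exact ⟨h1, h3⟩
  have hie : a + c ≤ s1 + b := by
    have hBm : MeasurableSet {ω | S0 ω = 1 ∧ S1 ω = 1} := by
      have : {ω | S0 ω = 1 ∧ S1 ω = 1} = S0 ⁻¹' {1} ∩ S1 ⁻¹' {1} := by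
        ext ω; simp [Set.mem_inter_iff]
      rw [this]
      exact (hS0m (measurableSet_singleton 1)).inter (hS1m (measurableSet_singleton 1))
    have h1 : μ ({ω | Y1 ω = 1 ∧ S1 ω = 1} ∪ {ω | S0 ω = 1 ∧ S1 ω = 1})
        + μ ({ω | Y1 ω = 1 ∧ S1 ω = 1} ∩ {ω | S0 ω = 1 ∧ S1 ω = 1})
        = μ {ω | Y1 ω = 1 ∧ S1 ω = 1} + μ {ω | S0 ω = 1 ∧ S1 ω = 1} :=
      measure_union_add_inter _ hBm
    have h2 : μ ({ω | Y1 ω = 1 ∧ S1 ω = 1} ∪ {ω | S0 ω = 1 ∧ S1 ω = 1}) ≤ μ {ω | S1 ω = 1} := by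
      apply measure_mono
      rintro ω (⟨_, h⟩ | ⟨_, h⟩) <;> exact h
    have h3 : {ω | Y1 ω = 1 ∧ S1 ω = 1} ∩ {ω | S0 ω = 1 ∧ S1 ω = 1}
        = {ω | Y1 ω = 1} ∩ {ω | S0 ω = 1 ∧ S1 ω = 1} := by
      ext ω; simp [Set.mem_inter_iff]; tauto
    have h4 : μ {ω | Y1 ω = 1 ∧ S1 ω = 1} + μ {ω | S0 ω = 1 ∧ S1 ω = 1}
        ≤ μ {ω | S1 ω = 1} + μ ({ω | Y1 ω = 1} ∩ {ω | S0 ω = 1 ∧ S1 ω = 1}) := by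
      rw [← h1, h3]
      exact add_le_add_left h2 _
    rw [ha, hc, hs1, hb, ← ENNReal.toReal_add (fin _) (fin _), ← ENNReal.toReal_add (fin _) (fin _)]
    exact ENNReal.toReal_le_toReal (by simp [fin]) (by simp [fin]) |>.mpr h4
  have hb0 : (0:ℝ) ≤ b := ENNReal.toReal_nonneg
  constructor
  · have heq : (a / s1 - (1 - c / s1)) / (c / s1) = (a - s1 + c) / c := by
      field_simp
      ring
    rw [heq, div_le_div_iff_of_pos_right hSSpos]
    linarith
  · have heq : (a / s1) / (c / s1) = a / c := by
      field_simp
    rw [heq, div_le_div_iff_of_pos_right hSSpos]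
    exact hba
end

section
/- Stochastic dominance implication: Under random assignment (D independent of (Y0, Y1, S0, S1)), P(D = 1) > 0, P(S1 = 1) > 0, and the stochastic dominance condition P(Y1 = 1 | S0 = 1, S1 = 1) ≥ P(Y1 = 1 | S0 = 0, S1 = 1) (with both conditioning events of positive probability), it holds that P(Y1 = 1 | S0 = 1, S1 = 1) ≥ P(Y = 1 | S = 1, D = 1), where S = S1·D + S0·(1−D) and Y = (Y1·D + Y0·(1−D))·S. -/
open MeasureTheory ProbabilityTheory

theorem stmt7 {Ω : Type*} [MeasurableSpace Ω] (μ : Measure Ω) [IsProbabilityMeasure μ]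
    (Y0 Y1 D S0 S1 : Ω → ℝ)
    (hY0m : Measurable Y0) (hY0b : ∀ ω, Y0 ω = 0 ∨ Y0 ω = 1)
    (hY1m : Measurable Y1) (hY1b : ∀ ω, Y1 ω = 0 ∨ Y1 ω = 1)
    (hDm : Measurable D) (hDb : ∀ ω, D ω = 0 ∨ D ω = 1)
    (hS0m : Measurable S0) (hS0b : ∀ ω, S0 ω = 0 ∨ S0 ω = 1)
    (hS1m : Measurable S1) (hS1b : ∀ ω, S1 ω = 0 ∨ S1 ω = 1)
    (hindep : IndepFun D (fun ω => (Y0 ω, Y1 ω, S0 ω, S1 ω)) μ)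
    (hD0 : 0 < (μ {ω | D ω = 1}).toReal)
    (h11pos : 0 < (μ {ω | S0 ω = 1 ∧ S1 ω = 1}).toReal)
    (h01pos : 0 < (μ {ω | S0 ω = 0 ∧ S1 ω = 1}).toReal)
    (hdom : condP μ {ω | S0 ω = 1 ∧ S1 ω = 1} {ω | Y1 ω = 1}
      ≥ condP μ {ω | S0 ω = 0 ∧ S1 ω = 1} {ω | Y1 ω = 1}) :
    condP μ {ω | S0 ω = 1 ∧ S1 ω = 1} {ω | Y1 ω = 1}
      ≥ condP μ {ω | (fun ω => S1 ω * D ω + S0 ω * (1 - D ω)) ω = 1 ∧ D ω = 1} {ω | (fun ω => (Y1 ω * D ω + Y0 ω * (1 - D ω)) * (S1 ω * D ω + S0 ω * (1 - D ω))) ω = 1} := by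
  classical
  set f : Ω → ℝ × ℝ × ℝ × ℝ := fun ω => (Y0 ω, Y1 ω, S0 ω, S1 ω) with hf
  have hfm : Measurable f := hY0m.prodMk (hY1m.prodMk (hS0m.prodMk hS1m))
  -- set identities
  have hsetS : {ω | (fun ω => S1 ω * D ω + S0 ω * (1 - D ω)) ω = 1 ∧ D ω = 1}
      = {ω | S1 ω = 1 ∧ D ω = 1} := by
    ext ω
    simp only [Set.mem_setOf_eq]
    constructor
    · rintro ⟨h1, h2⟩
      rw [h2] at h1; norm_num at h1; exact ⟨h1, h2⟩
    · rintro ⟨h1, h2⟩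
      rw [h1, h2]; norm_num
  have hsetY : {ω | (fun ω => (Y1 ω * D ω + Y0 ω * (1 - D ω)) * (S1 ω * D ω + S0 ω * (1 - D ω))) ω = 1}
      ∩ {ω | S1 ω = 1 ∧ D ω = 1}
      = {ω | Y1 ω = 1 ∧ S1 ω = 1} ∩ {ω | D ω = 1} := by
    ext ω
    simp only [Set.mem_setOf_eq, Set.mem_inter_iff]
    constructor
    · rintro ⟨h1, h2, h3⟩
      rw [h2, h3] at h1; norm_num at h1
      exact ⟨⟨h1, h2⟩, h3⟩
    · rintro ⟨⟨h1, h2⟩, h3⟩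
      refine ⟨?_, h2, h3⟩
      rw [h1, h2, h3]; norm_num
  have hsetS' : {ω | S1 ω = 1 ∧ D ω = 1} = {ω | S1 ω = 1} ∩ {ω | D ω = 1} := rfl
  -- independence facts
  have hind : ∀ t : Set (ℝ × ℝ × ℝ × ℝ), MeasurableSet t →
      μ (f ⁻¹' t ∩ {ω | D ω = 1}) = μ (f ⁻¹' t) * μ {ω | D ω = 1} := by
    intro t ht
    have h := hindep.measure_inter_preimage_eq_mul ({1} : Set ℝ) t
      (measurableSet_singleton 1) ht
    have : D ⁻¹' {1} = {ω | D ω = 1} := rfl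
    rw [this] at h
    rw [Set.inter_comm, h, mul_comm]
  have hYS : {ω | Y1 ω = 1 ∧ S1 ω = 1} = f ⁻¹' {p : ℝ × ℝ × ℝ × ℝ | p.2.1 = 1 ∧ p.2.2.2 = 1} := rfl
  have hS1set : {ω | S1 ω = 1} = f ⁻¹' {p : ℝ × ℝ × ℝ × ℝ | p.2.2.2 = 1} := rfl
  have htm1 : MeasurableSet {p : ℝ × ℝ × ℝ × ℝ | p.2.1 = 1 ∧ p.2.2.2 = 1} := by
    have : {p : ℝ × ℝ × ℝ × ℝ | p.2.1 = 1 ∧ p.2.2.2 = 1}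
        = {p : ℝ × ℝ × ℝ × ℝ | p.2.1 = 1} ∩ {p : ℝ × ℝ × ℝ × ℝ | p.2.2.2 = 1} := rfl
    rw [this]
    exact (measurable_snd.fst (measurableSet_singleton 1)).inter
      (measurable_snd.snd.snd (measurableSet_singleton 1))
  have htm2 : MeasurableSet {p : ℝ × ℝ × ℝ × ℝ | p.2.2.2 = 1} :=
    measurable_snd.snd.snd (measurableSet_singleton 1)
  have hnum : μ ({ω | Y1 ω = 1 ∧ S1 ω = 1} ∩ {ω | D ω = 1})
      = μ {ω | Y1 ω = 1 ∧ S1 ω = 1} * μ {ω | D ω = 1} := by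
    rw [hYS]; exact hind _ htm1
  have hden : μ ({ω | S1 ω = 1} ∩ {ω | D ω = 1})
      = μ {ω | S1 ω = 1} * μ {ω | D ω = 1} := by
    rw [hS1set]; exact hind _ htm2
  -- RHS simplification
  have hμfin : ∀ s : Set Ω, μ s ≠ ⊤ := fun s => measure_ne_top μ s
  have hRHS : condP μ {ω | (fun ω => S1 ω * D ω + S0 ω * (1 - D ω)) ω = 1 ∧ D ω = 1}
      {ω | (fun ω => (Y1 ω * D ω + Y0 ω * (1 - D ω)) * (S1 ω * D ω + S0 ω * (1 - D ω))) ω = 1}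
      = (μ {ω | Y1 ω = 1 ∧ S1 ω = 1}).toReal / (μ {ω | S1 ω = 1}).toReal := by
    unfold condP
    rw [hsetS, hsetY, hsetS', hnum, hden, ENNReal.toReal_mul, ENNReal.toReal_mul,
      mul_div_mul_right _ _ (ne_of_gt hD0)]
  rw [hRHS]
  -- partition of {S1 = 1}
  have hA1m : MeasurableSet {ω | S0 ω = 1 ∧ S1 ω = 1} :=
    (hS0m (measurableSet_singleton 1)).inter (hS1m (measurableSet_singleton 1))
  have hA0m : MeasurableSet {ω | S0 ω = 0 ∧ S1 ω = 1} :=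
    (hS0m (measurableSet_singleton 0)).inter (hS1m (measurableSet_singleton 1))
  have hpart : {ω | S1 ω = 1} = {ω | S0 ω = 1 ∧ S1 ω = 1} ∪ {ω | S0 ω = 0 ∧ S1 ω = 1} := by
    ext ω
    simp only [Set.mem_setOf_eq, Set.mem_union]
    constructor
    · intro h
      rcases hS0b ω with h0 | h0
      · exact Or.inr ⟨h0, h⟩
      · exact Or.inl ⟨h0, h⟩
    · rintro (⟨_, h⟩ | ⟨_, h⟩) <;> exact h
  have hdisj : Disjoint {ω | S0 ω = 1 ∧ S1 ω = 1} {ω | S0 ω = 0 ∧ S1 ω = 1} := by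
    rw [Set.disjoint_left]
    rintro ω ⟨h1, _⟩ ⟨h0, _⟩
    rw [h1] at h0; norm_num at h0
  have hpartY : {ω | Y1 ω = 1 ∧ S1 ω = 1}
      = ({ω | Y1 ω = 1} ∩ {ω | S0 ω = 1 ∧ S1 ω = 1}) ∪ ({ω | Y1 ω = 1} ∩ {ω | S0 ω = 0 ∧ S1 ω = 1}) := by
    rw [← Set.inter_union_distrib_left, ← hpart]
    rfl
  have hdisjY : Disjoint ({ω | Y1 ω = 1} ∩ {ω | S0 ω = 1 ∧ S1 ω = 1})
      ({ω | Y1 ω = 1} ∩ {ω | S0 ω = 0 ∧ S1 ω = 1}) :=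
    hdisj.mono Set.inter_subset_right Set.inter_subset_right
  set a1 := (μ ({ω | Y1 ω = 1} ∩ {ω | S0 ω = 1 ∧ S1 ω = 1})).toReal with ha1
  set a0 := (μ ({ω | Y1 ω = 1} ∩ {ω | S0 ω = 0 ∧ S1 ω = 1})).toReal with ha0
  set m1 := (μ {ω | S0 ω = 1 ∧ S1 ω = 1}).toReal with hm1
  set m0 := (μ {ω | S0 ω = 0 ∧ S1 ω = 1}).toReal with hm0
  have hT : (μ {ω | S1 ω = 1}).toReal = m1 + m0 := by
    rw [hpart, measure_union hdisj hA0m, ENNReal.toReal_add (hμfin _) (hμfin _)]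
  have hTY : (μ {ω | Y1 ω = 1 ∧ S1 ω = 1}).toReal = a1 + a0 := by
    rw [hpartY, measure_union hdisjY ((hY1m (measurableSet_singleton 1)).inter hA0m),
      ENNReal.toReal_add (hμfin _) (hμfin _)]
  have ha1nn : 0 ≤ a1 := ENNReal.toReal_nonneg
  have ha0nn : 0 ≤ a0 := ENNReal.toReal_nonneg
  unfold condP at hdom ⊢
  rw [hT, hTY]
  rw [ge_iff_le, div_le_div_iff₀ (by positivity) h11pos]
  rw [ge_iff_le, div_le_div_iff₀ h01pos h11pos] at hdom
  nlinarith [h11pos, h01pos]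
end

section
/- Law of total probability decomposition for the observed treated outcome: Under random assignment (D independent of (Y0, Y1, S0, S1)) and P(D = 1) > 0, P(S1 = 1) > 0, P(S0 = 1, S1 = 1) > 0, P(S0 = 0, S1 = 1) > 0, we have P(Y = 1 | S = 1, D = 1) = P(Y1 = 1 | S0 = 1, S1 = 1)·q + P(Y1 = 1 | S0 = 0, S1 = 1)·(1 − q), where q = P(S0 = 1, S1 = 1 | S1 = 1), S = S1·D + S0·(1−D), Y = (Y1·D + Y0·(1−D))·S. -/
open MeasureTheory ProbabilityTheory

theorem stmt8 {Ω : Type*} [MeasurableSpace Ω] (μ : Measure Ω) [IsProbabilityMeasure μ]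
    (Y0 Y1 D S0 S1 : Ω → ℝ)
    (hY0m : Measurable Y0) (hY0b : ∀ ω, Y0 ω = 0 ∨ Y0 ω = 1)
    (hY1m : Measurable Y1) (hY1b : ∀ ω, Y1 ω = 0 ∨ Y1 ω = 1)
    (hDm : Measurable D) (hDb : ∀ ω, D ω = 0 ∨ D ω = 1)
    (hS0m : Measurable S0) (hS0b : ∀ ω, S0 ω = 0 ∨ S0 ω = 1)
    (hS1m : Measurable S1) (hS1b : ∀ ω, S1 ω = 0 ∨ S1 ω = 1)
    (hindep : IndepFun D (fun ω => (Y0 ω, Y1 ω, S0 ω, S1 ω)) μ)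
    (hD0 : 0 < (μ {ω | D ω = 1}).toReal)
    (hS1pos : 0 < (μ {ω | S1 ω = 1}).toReal)
    (h11pos : 0 < (μ {ω | S0 ω = 1 ∧ S1 ω = 1}).toReal)
    (h01pos : 0 < (μ {ω | S0 ω = 0 ∧ S1 ω = 1}).toReal) :
    condP μ {ω | (fun ω => S1 ω * D ω + S0 ω * (1 - D ω)) ω = 1 ∧ D ω = 1} {ω | (fun ω => (Y1 ω * D ω + Y0 ω * (1 - D ω)) * (S1 ω * D ω + S0 ω * (1 - D ω))) ω = 1}
      = condP μ {ω | S0 ω = 1 ∧ S1 ω = 1} {ω | Y1 ω = 1}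
          * condP μ {ω | S1 ω = 1} {ω | S0 ω = 1 ∧ S1 ω = 1}
        + condP μ {ω | S0 ω = 0 ∧ S1 ω = 1} {ω | Y1 ω = 1}
          * (1 - condP μ {ω | S1 ω = 1} {ω | S0 ω = 1 ∧ S1 ω = 1}) := by
  classical
  set T : Ω → ℝ × ℝ × ℝ × ℝ := fun ω => (Y0 ω, Y1 ω, S0 ω, S1 ω) with hT
  have hTm : Measurable T := hY0m.prodMk (hY1m.prodMk (hS0m.prodMk hS1m))
  have key : ∀ (t : Set (ℝ × ℝ × ℝ × ℝ)), MeasurableSet t →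
      μ (T ⁻¹' t ∩ D ⁻¹' {1}) = μ (T ⁻¹' t) * μ (D ⁻¹' {1}) := by
    intro t ht
    rw [Set.inter_comm,
      hindep.measure_inter_preimage_eq_mul _ _ (measurableSet_singleton 1) ht, mul_comm]
  -- measurable sets in ℝ⁴
  have hm1 : MeasurableSet {p : ℝ × ℝ × ℝ × ℝ | p.2.2.2 = 1} :=
    (measurable_snd.comp (measurable_snd.comp measurable_snd)) (measurableSet_singleton 1)
  have hm2 : MeasurableSet {p : ℝ × ℝ × ℝ × ℝ | p.2.1 = 1 ∧ p.2.2.2 = 1} := by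
    have h1 : MeasurableSet {p : ℝ × ℝ × ℝ × ℝ | p.2.1 = 1} :=
      (measurable_fst.comp measurable_snd) (measurableSet_singleton 1)
    exact h1.inter hm1
  -- set identifications
  have hAset : {ω | (fun ω => S1 ω * D ω + S0 ω * (1 - D ω)) ω = 1 ∧ D ω = 1}
      = T ⁻¹' {p | p.2.2.2 = 1} ∩ D ⁻¹' {1} := by
    ext ω
    simp only [Set.mem_setOf_eq, Set.mem_inter_iff, Set.mem_preimage, Set.mem_singleton_iff, hT]
    rcases hDb ω with h | h <;> rcases hS1b ω with h1 | h1 <;> simp [h, h1] <;> norm_num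
  have hBAset : {ω | (fun ω => (Y1 ω * D ω + Y0 ω * (1 - D ω)) * (S1 ω * D ω + S0 ω * (1 - D ω))) ω = 1}
      ∩ {ω | (fun ω => S1 ω * D ω + S0 ω * (1 - D ω)) ω = 1 ∧ D ω = 1}
      = T ⁻¹' {p | p.2.1 = 1 ∧ p.2.2.2 = 1} ∩ D ⁻¹' {1} := by
    ext ω
    simp only [Set.mem_setOf_eq, Set.mem_inter_iff, Set.mem_preimage, Set.mem_singleton_iff, hT]
    rcases hDb ω with h | h <;> rcases hS1b ω with h1 | h1 <;> rcases hY1b ω with h2 | h2 <;>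
      simp [h, h1, h2] <;> norm_num
  have hT1 : T ⁻¹' {p | p.2.2.2 = 1} = {ω | S1 ω = 1} := rfl
  have hT2 : T ⁻¹' {p | p.2.1 = 1 ∧ p.2.2.2 = 1} = {ω | Y1 ω = 1 ∧ S1 ω = 1} := rfl
  have hD1 : D ⁻¹' {1} = {ω | D ω = 1} := rfl
  -- abbreviations
  set a := (μ {ω | Y1 ω = 1 ∧ S1 ω = 1}).toReal with ha
  set s1 := (μ {ω | S1 ω = 1}).toReal with hs1
  set d := (μ {ω | D ω = 1}).toReal with hd
  set m1 := (μ {ω | S0 ω = 1 ∧ S1 ω = 1}).toReal with hm1'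
  set m0 := (μ {ω | S0 ω = 0 ∧ S1 ω = 1}).toReal with hm0'
  set b1 := (μ {ω | Y1 ω = 1 ∧ S0 ω = 1 ∧ S1 ω = 1}).toReal with hb1
  set b0 := (μ {ω | Y1 ω = 1 ∧ S0 ω = 0 ∧ S1 ω = 1}).toReal with hb0
  -- LHS
  have hLHS : condP μ {ω | (fun ω => S1 ω * D ω + S0 ω * (1 - D ω)) ω = 1 ∧ D ω = 1}
      {ω | (fun ω => (Y1 ω * D ω + Y0 ω * (1 - D ω)) * (S1 ω * D ω + S0 ω * (1 - D ω))) ω = 1}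
      = a / s1 := by
    rw [condP, hBAset, hAset, key _ hm2, key _ hm1, hT1, hT2, hD1,
      ENNReal.toReal_mul, ENNReal.toReal_mul]
    rw [mul_div_mul_right _ _ (ne_of_gt hD0)]
  -- measurability of base sets in Ω
  have mS1 : MeasurableSet {ω | S1 ω = 1} := hS1m (measurableSet_singleton 1)
  have mS01 : MeasurableSet {ω | S0 ω = 1} := hS0m (measurableSet_singleton 1)
  have mS00 : MeasurableSet {ω | S0 ω = 0} := hS0m (measurableSet_singleton 0)
  have mY1 : MeasurableSet {ω | Y1 ω = 1} := hY1m (measurableSet_singleton 1)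
  -- additivity: m1 + m0 = s1
  have hm1ne : m1 ≠ 0 := ne_of_gt h11pos
  have hm0ne : m0 ≠ 0 := ne_of_gt h01pos
  have hs1ne : s1 ≠ 0 := ne_of_gt hS1pos
  have hsum1 : m1 + m0 = s1 := by
    rw [hm1', hm0', hs1, ← ENNReal.toReal_add (measure_ne_top _ _) (measure_ne_top _ _)]
    congr 1
    have hu : {ω | S0 ω = 1 ∧ S1 ω = 1} ∪ {ω | S0 ω = 0 ∧ S1 ω = 1} = {ω | S1 ω = 1} := by
      ext ω
      simp only [Set.mem_union, Set.mem_setOf_eq]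
      rcases hS0b ω with h | h <;> simp [h]
    have hdisj : Disjoint {ω | S0 ω = 1 ∧ S1 ω = 1} {ω | S0 ω = 0 ∧ S1 ω = 1} := by
      rw [Set.disjoint_left]
      intro ω h1 h2
      simp only [Set.mem_setOf_eq] at h1 h2
      rw [h1.1] at h2
      exact one_ne_zero h2.1
    rw [← hu, measure_union hdisj (mS00.inter mS1)]
  have hsum2 : b1 + b0 = a := by
    rw [hb1, hb0, ha, ← ENNReal.toReal_add (measure_ne_top _ _) (measure_ne_top _ _)]
    congr 1
    have hu : {ω | Y1 ω = 1 ∧ S0 ω = 1 ∧ S1 ω = 1} ∪ {ω | Y1 ω = 1 ∧ S0 ω = 0 ∧ S1 ω = 1}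
        = {ω | Y1 ω = 1 ∧ S1 ω = 1} := by
      ext ω
      simp only [Set.mem_union, Set.mem_setOf_eq]
      rcases hS0b ω with h | h <;> simp [h] <;> tauto
    have hdisj : Disjoint {ω | Y1 ω = 1 ∧ S0 ω = 1 ∧ S1 ω = 1}
        {ω | Y1 ω = 1 ∧ S0 ω = 0 ∧ S1 ω = 1} := by
      rw [Set.disjoint_left]
      intro ω h1 h2
      simp only [Set.mem_setOf_eq] at h1 h2
      rw [h1.2.1] at h2
      exact one_ne_zero h2.2.1
    rw [← hu, measure_union hdisj (mY1.inter (mS00.inter mS1))]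
  -- rewrite RHS condP terms
  have hc1 : condP μ {ω | S0 ω = 1 ∧ S1 ω = 1} {ω | Y1 ω = 1} = b1 / m1 := by
    have e : {ω | Y1 ω = 1} ∩ {ω | S0 ω = 1 ∧ S1 ω = 1}
        = {ω | Y1 ω = 1 ∧ S0 ω = 1 ∧ S1 ω = 1} := Set.ext fun ω => Iff.rfl
    rw [condP, e]
  have hc0 : condP μ {ω | S0 ω = 0 ∧ S1 ω = 1} {ω | Y1 ω = 1} = b0 / m0 := by
    have e : {ω | Y1 ω = 1} ∩ {ω | S0 ω = 0 ∧ S1 ω = 1}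
        = {ω | Y1 ω = 1 ∧ S0 ω = 0 ∧ S1 ω = 1} := Set.ext fun ω => Iff.rfl
    rw [condP, e]
  have hq : condP μ {ω | S1 ω = 1} {ω | S0 ω = 1 ∧ S1 ω = 1} = m1 / s1 := by
    have e : {ω | S0 ω = 1 ∧ S1 ω = 1} ∩ {ω | S1 ω = 1}
        = {ω | S0 ω = 1 ∧ S1 ω = 1} := by
      ext ω
      simp only [Set.mem_inter_iff, Set.mem_setOf_eq]
      tauto
    rw [condP, e]
  rw [hLHS, hc1, hc0, hq]
  have h1q : 1 - m1 / s1 = m0 / s1 := by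
    field_simp
    linarith
  rw [h1q]
  have e1 : b1 / m1 * (m1 / s1) = b1 / s1 := by
    field_simp
  have e0 : b0 / m0 * (m0 / s1) = b0 / s1 := by
    field_simp
  rw [e1, e0, ← add_div, hsum2]
end

section
/- Lower bound LB1 on the probability of causation for the always-observed: Under random assignment, positive mass (0 < P(D = 1) < 1 and P(Y0 = 0, S0 = 1, S1 = 1) > 0), and monotone sample selection (S1 ≥ S0), the parameter θ = P(Y1 = 1 | Y0 = 0, S0 = 1, S1 = 1) satisfies θ ≥ max{ ([p1 − (1 − r)]/r + p0 − 1)/p0 , 0 }, where r = P(S = 1 | D = 0)/P(S = 1 | D = 1), p1 = P(Y = 1 | S = 1, D = 1), p0 = P(Y = 0 | S = 1, D = 0), S = S1·D + S0·(1−D), Y = (Y1·D + Y0·(1−D))·S. -/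
open MeasureTheory ProbabilityTheory

theorem stmt9 {Ω : Type*} [MeasurableSpace Ω] (μ : Measure Ω) [IsProbabilityMeasure μ]
    (Y0 Y1 D S0 S1 : Ω → ℝ)
    (hY0m : Measurable Y0) (hY0b : ∀ ω, Y0 ω = 0 ∨ Y0 ω = 1)
    (hY1m : Measurable Y1) (hY1b : ∀ ω, Y1 ω = 0 ∨ Y1 ω = 1)
    (hDm : Measurable D) (hDb : ∀ ω, D ω = 0 ∨ D ω = 1)
    (hS0m : Measurable S0) (hS0b : ∀ ω, S0 ω = 0 ∨ S0 ω = 1)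
    (hS1m : Measurable S1) (hS1b : ∀ ω, S1 ω = 0 ∨ S1 ω = 1)
    (hindep : IndepFun D (fun ω => (Y0 ω, Y1 ω, S0 ω, S1 ω)) μ)
    (hD0 : 0 < (μ {ω | D ω = 1}).toReal) (hD1 : (μ {ω | D ω = 1}).toReal < 1)
    (hposmass : 0 < (μ {ω | Y0 ω = 0 ∧ S0 ω = 1 ∧ S1 ω = 1}).toReal)
    (hmonoS : ∀ ω, S0 ω ≤ S1 ω) :
    condP μ {ω | Y0 ω = 0 ∧ S0 ω = 1 ∧ S1 ω = 1} {ω | Y1 ω = 1}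
      ≥ max (((condP μ {ω | (fun ω => S1 ω * D ω + S0 ω * (1 - D ω)) ω = 1 ∧ D ω = 1} {ω | (fun ω => (Y1 ω * D ω + Y0 ω * (1 - D ω)) * (S1 ω * D ω + S0 ω * (1 - D ω))) ω = 1} - (1 - (condP μ {ω | D ω = 0} {ω | (fun ω => S1 ω * D ω + S0 ω * (1 - D ω)) ω = 1} / condP μ {ω | D ω = 1} {ω | (fun ω => S1 ω * D ω + S0 ω * (1 - D ω)) ω = 1}))) / (condP μ {ω | D ω = 0} {ω | (fun ω => S1 ω * D ω + S0 ω * (1 - D ω)) ω = 1} / condP μ {ω | D ω = 1} {ω | (fun ω => S1 ω * D ω + S0 ω * (1 - D ω)) ω = 1}) + condP μ {ω | (fun ω => S1 ω * D ω + S0 ω * (1 - D ω)) ω = 1 ∧ D ω = 0} {ω | (fun ω => (Y1 ω * D ω + Y0 ω * (1 - D ω)) * (S1 ω * D ω + S0 ω * (1 - D ω))) ω = 0} - 1) / (condP μ {ω | (fun ω => S1 ω * D ω + S0 ω * (1 - D ω)) ω = 1 ∧ D ω = 0} {ω | (fun ω => (Y1 ω * D ω + Y0 ω * (1 - D ω))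 * (S1 ω * D ω + S0 ω * (1 - D ω))) ω = 0})) 0 := by
  classical
  -- abbreviations
  have hS01 : ∀ ω, S0 ω = 1 → S1 ω = 1 := by
    intro ω h
    rcases hS1b ω with h1 | h1
    · exfalso; have := hmonoS ω; rw [h, h1] at this; linarith
    · exact h1
  set W : Ω → ℝ × ℝ × ℝ × ℝ := fun ω => (Y0 ω, Y1 ω, S0 ω, S1 ω) with hW
  have hkey : ∀ (s : Set (ℝ × ℝ × ℝ × ℝ)) (t : Set ℝ), MeasurableSet s → MeasurableSet t →
      μ (W ⁻¹' s ∩ D ⁻¹' t) = μ (W ⁻¹' s) * μ (D ⁻¹' t) := fun s t hs ht =>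
    (indepFun_iff_measure_inter_preimage_eq_mul.mp hindep.symm) s t hs ht
  -- the four basic sets in ℝ⁴
  set sA : Set (ℝ × ℝ × ℝ × ℝ) := {p | p.2.2.2 = 1} with hsA
  set sB : Set (ℝ × ℝ × ℝ × ℝ) := {p | p.2.2.1 = 1} with hsB
  set sC : Set (ℝ × ℝ × ℝ × ℝ) := {p | p.2.1 = 1 ∧ p.2.2.2 = 1} with hsC
  set sE : Set (ℝ × ℝ × ℝ × ℝ) := {p | p.1 = 0 ∧ p.2.2.1 = 1} with hsE
  have msA : MeasurableSet sA := measurableSet_eq_fun measurable_snd.snd.snd measurable_const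
  have msB : MeasurableSet sB := measurableSet_eq_fun measurable_snd.snd.fst measurable_const
  have msC : MeasurableSet sC :=
    (measurableSet_eq_fun measurable_snd.fst measurable_const).inter
      (measurableSet_eq_fun measurable_snd.snd.snd measurable_const)
  have msE : MeasurableSet sE :=
    (measurableSet_eq_fun measurable_fst measurable_const).inter
      (measurableSet_eq_fun measurable_snd.snd.fst measurable_const)
  have mt1 : MeasurableSet ({1} : Set ℝ) := measurableSet_singleton 1
  have mt0 : MeasurableSet ({0} : Set ℝ) := measurableSet_singleton 0
  -- real-valued quantities
  set a : ℝ := (μ (W ⁻¹' sA)).toReal with ha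
  set b : ℝ := (μ (W ⁻¹' sB)).toReal with hb
  set c : ℝ := (μ (W ⁻¹' sC)).toReal with hc
  set e : ℝ := (μ (W ⁻¹' sE)).toReal with he
  set π : ℝ := (μ {ω | D ω = 1}).toReal with hπ
  set f : ℝ := (μ ({ω | Y1 ω = 1} ∩ W ⁻¹' sE)).toReal with hf
  -- D-event identifications
  have hD1set : {ω | D ω = 1} = D ⁻¹' {1} := rfl
  have hD0set : {ω | D ω = 0} = D ⁻¹' {0} := rfl
  have hD0compl : (D ⁻¹' {0} : Set Ω) = (D ⁻¹' {1})ᶜ := by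
    ext ω
    rcases hDb ω with h | h <;> simp [Set.mem_preimage, h]
  have hπ0' : (μ (D ⁻¹' {0})).toReal = 1 - π := by
    rw [hD0compl, measure_compl (hDm mt1) (measure_ne_top μ _), measure_univ,
      ENNReal.toReal_sub_of_le prob_le_one ENNReal.one_ne_top, ENNReal.toReal_one, hπ, hD1set]
  have hπpos : 0 < π := hD0
  have h1πpos : 0 < 1 - π := by linarith
  -- pointwise set equalities
  have setS1 : {ω | (fun ω => S1 ω * D ω + S0 ω * (1 - D ω)) ω = 1 ∧ D ω = 1}
      = W ⁻¹' sA ∩ D ⁻¹' {1} := by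
    ext ω
    rcases hDb ω with h | h <;>
      simp [Set.mem_preimage, Set.mem_setOf_eq, hW, hsA, h]
  have setS0 : {ω | (fun ω => S1 ω * D ω + S0 ω * (1 - D ω)) ω = 1 ∧ D ω = 0}
      = W ⁻¹' sB ∩ D ⁻¹' {0} := by
    ext ω
    rcases hDb ω with h | h <;>
      simp [Set.mem_preimage, Set.mem_setOf_eq, hW, hsB, h]
  have setY1 : {ω | (fun ω => (Y1 ω * D ω + Y0 ω * (1 - D ω)) * (S1 ω * D ω + S0 ω * (1 - D ω))) ω = 1}
      ∩ {ω | (fun ω => S1 ω * D ω + S0 ω * (1 - D ω)) ω = 1 ∧ D ω = 1}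
      = W ⁻¹' sC ∩ D ⁻¹' {1} := by
    ext ω
    rcases hDb ω with h | h <;> rcases hY1b ω with h1 | h1 <;> rcases hS1b ω with h3 | h3 <;>
      simp [Set.mem_preimage, Set.mem_setOf_eq, hW, hsC, h, h1, h3]
  have setY0 : {ω | (fun ω => (Y1 ω * D ω + Y0 ω * (1 - D ω)) * (S1 ω * D ω + S0 ω * (1 - D ω))) ω = 0}
      ∩ {ω | (fun ω => S1 ω * D ω + S0 ω * (1 - D ω)) ω = 1 ∧ D ω = 0}
      = W ⁻¹' sE ∩ D ⁻¹' {0} := by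
    ext ω
    rcases hDb ω with h | h <;> rcases hY0b ω with h1 | h1 <;> rcases hS0b ω with h3 | h3 <;>
      simp [Set.mem_preimage, Set.mem_setOf_eq, hW, hsE, h, h1, h3]
  have setTheta : {ω | Y0 ω = 0 ∧ S0 ω = 1 ∧ S1 ω = 1} = W ⁻¹' sE := by
    ext ω
    simp only [Set.mem_preimage, Set.mem_setOf_eq, hW, hsE]
    constructor
    · rintro ⟨h1, h2, _⟩; exact ⟨h1, h2⟩
    · rintro ⟨h1, h2⟩; exact ⟨h1, h2, hS01 ω h2⟩
  -- values of the conditional probabilities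
  have cond1 : condP μ {ω | D ω = 1} {ω | (fun ω => S1 ω * D ω + S0 ω * (1 - D ω)) ω = 1} = a := by
    have hI : {ω | (fun ω => S1 ω * D ω + S0 ω * (1 - D ω)) ω = 1} ∩ {ω | D ω = 1}
        = W ⁻¹' sA ∩ D ⁻¹' {1} := by rw [← setS1]; ext ω; simp [Set.mem_setOf_eq]
    rw [condP, hI, hkey sA {1} msA mt1, ENNReal.toReal_mul]
    rw [hD1set] at hπ
    rw [← ha, ← hπ, mul_div_assoc, div_self (ne_of_gt hπpos), mul_one]
  have cond0 : condP μ {ω | D ω = 0} {ω | (fun ω => S1 ω * D ω + S0 ω * (1 - D ω)) ω = 1} = b := by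
    have hI : {ω | (fun ω => S1 ω * D ω + S0 ω * (1 - D ω)) ω = 1} ∩ {ω | D ω = 0}
        = W ⁻¹' sB ∩ D ⁻¹' {0} := by rw [← setS0]; ext ω; simp [Set.mem_setOf_eq]
    rw [condP, hI, hkey sB {0} msB mt0, ENNReal.toReal_mul, ← hb, hD0set, hπ0']
    rw [mul_div_assoc, div_self (ne_of_gt h1πpos), mul_one]
  have condp1 : condP μ {ω | (fun ω => S1 ω * D ω + S0 ω * (1 - D ω)) ω = 1 ∧ D ω = 1}
      {ω | (fun ω => (Y1 ω * D ω + Y0 ω * (1 - D ω)) * (S1 ω * D ω + S0 ω * (1 - D ω))) ω = 1}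
      = c / a := by
    rw [condP, setY1, setS1, hkey sC {1} msC mt1, hkey sA {1} msA mt1,
      ENNReal.toReal_mul, ENNReal.toReal_mul, ← hc, ← ha]
    rw [hD1set] at hπ
    rw [← hπ, mul_div_mul_right _ _ (ne_of_gt hπpos)]
  have condp0 : condP μ {ω | (fun ω => S1 ω * D ω + S0 ω * (1 - D ω)) ω = 1 ∧ D ω = 0}
      {ω | (fun ω => (Y1 ω * D ω + Y0 ω * (1 - D ω)) * (S1 ω * D ω + S0 ω * (1 - D ω))) ω = 0}
      = e / b := by
    rw [condP, setY0, setS0, hkey sE {0} msE mt0, hkey sB {0} msB mt0,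
      ENNReal.toReal_mul, ENNReal.toReal_mul, ← he, ← hb, hπ0',
      mul_div_mul_right _ _ (ne_of_gt h1πpos)]
  have condθ : condP μ {ω | Y0 ω = 0 ∧ S0 ω = 1 ∧ S1 ω = 1} {ω | Y1 ω = 1} = f / e := by
    rw [condP, setTheta, ← hf, ← he]
  -- basic inequalities between the real quantities
  have hepos : 0 < e := by rwa [setTheta] at hposmass
  have hba : W ⁻¹' sB ⊆ W ⁻¹' sA := by
    intro ω hω
    simp only [Set.mem_preimage, hW, hsA, hsB, Set.mem_setOf_eq] at *
    exact hS01 ω hω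
  have heb : W ⁻¹' sE ⊆ W ⁻¹' sB := by
    intro ω hω
    simp only [Set.mem_preimage, hW, hsE, hsB, Set.mem_setOf_eq] at *
    exact hω.2
  have hble : e ≤ b :=
    ENNReal.toReal_le_toReal (measure_ne_top μ _) (measure_ne_top μ _) |>.mpr (measure_mono heb)
  have hab : b ≤ a :=
    ENNReal.toReal_le_toReal (measure_ne_top μ _) (measure_ne_top μ _) |>.mpr (measure_mono hba)
  have hbpos : 0 < b := lt_of_lt_of_le hepos hble
  have hapos : 0 < a := lt_of_lt_of_le hbpos hab
  -- key inequality : c - a + e ≤ f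
  have hsplitE : μ (({ω | Y1 ω = 1}) ∩ W ⁻¹' sE) + μ (W ⁻¹' sE \ {ω | Y1 ω = 1}) = μ (W ⁻¹' sE) := by
    rw [Set.inter_comm]
    exact measure_inter_add_diff _ (hY1m mt1)
  have hsplitA : μ (({ω | Y1 ω = 1}) ∩ W ⁻¹' sA) + μ (W ⁻¹' sA \ {ω | Y1 ω = 1}) = μ (W ⁻¹' sA) := by
    rw [Set.inter_comm]
    exact measure_inter_add_diff _ (hY1m mt1)
  have hCeq : ({ω | Y1 ω = 1}) ∩ W ⁻¹' sA = W ⁻¹' sC := by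
    ext ω
    simp [Set.mem_preimage, Set.mem_setOf_eq, hW, hsA, hsC]
  have hgh : μ (W ⁻¹' sE \ {ω | Y1 ω = 1}) ≤ μ (W ⁻¹' sA \ {ω | Y1 ω = 1}) :=
    measure_mono (Set.diff_subset_diff_left (heb.trans hba))
  have hEsum : e = f + (μ (W ⁻¹' sE \ {ω | Y1 ω = 1})).toReal := by
    rw [he, hf, ← hsplitE, ENNReal.toReal_add (measure_ne_top μ _) (measure_ne_top μ _)]
  have hAsum : a = c + (μ (W ⁻¹' sA \ {ω | Y1 ω = 1})).toReal := by
    rw [ha, hc, ← hCeq, ← hsplitA, ENNReal.toReal_add (measure_ne_top μ _) (measure_ne_top μ _)]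
  have hgh' : (μ (W ⁻¹' sE \ {ω | Y1 ω = 1})).toReal ≤ (μ (W ⁻¹' sA \ {ω | Y1 ω = 1})).toReal :=
    ENNReal.toReal_le_toReal (measure_ne_top μ _) (measure_ne_top μ _) |>.mpr hgh
  have hkey2 : c - a + e ≤ f := by linarith
  have hfnn : 0 ≤ f := ENNReal.toReal_nonneg
  -- final algebra
  rw [condθ, cond1, cond0, condp1, condp0, ge_iff_le, max_le_iff]
  constructor
  · have halg : ((c / a - (1 - b / a)) / (b / a) + e / b - 1) / (e / b) = (c - a + e) / e := by
      field_simp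
      ring
    rw [halg]
    rw [div_le_div_iff_of_pos_right hepos]
    exact hkey2
  · positivity
end

section
/- Upper bound UB1 on the probability of causation for the always-observed: Under random assignment, positive mass (0 < P(D = 1) < 1 and P(Y0 = 0, S0 = 1, S1 = 1) > 0), and monotone sample selection (S1 ≥ S0), the parameter θ = P(Y1 = 1 | Y0 = 0, S0 = 1, S1 = 1) satisfies θ ≤ min{ p1·(1/r)/p0 , 1 }, where r = P(S = 1 | D = 0)/P(S = 1 | D = 1), p1 = P(Y = 1 | S = 1, D = 1), p0 = P(Y = 0 | S = 1, D = 0), S = S1·D + S0·(1−D), Y = (Y1·D + Y0·(1−D))·S. -/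
open MeasureTheory ProbabilityTheory

theorem stmt10 {Ω : Type*} [MeasurableSpace Ω] (μ : Measure Ω) [IsProbabilityMeasure μ]
    (Y0 Y1 D S0 S1 : Ω → ℝ)
    (hY0m : Measurable Y0) (hY0b : ∀ ω, Y0 ω = 0 ∨ Y0 ω = 1)
    (hY1m : Measurable Y1) (hY1b : ∀ ω, Y1 ω = 0 ∨ Y1 ω = 1)
    (hDm : Measurable D) (hDb : ∀ ω, D ω = 0 ∨ D ω = 1)
    (hS0m : Measurable S0) (hS0b : ∀ ω, S0 ω = 0 ∨ S0 ω = 1)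
    (hS1m : Measurable S1) (hS1b : ∀ ω, S1 ω = 0 ∨ S1 ω = 1)
    (hindep : IndepFun D (fun ω => (Y0 ω, Y1 ω, S0 ω, S1 ω)) μ)
    (hD0 : 0 < (μ {ω | D ω = 1}).toReal) (hD1 : (μ {ω | D ω = 1}).toReal < 1)
    (hposmass : 0 < (μ {ω | Y0 ω = 0 ∧ S0 ω = 1 ∧ S1 ω = 1}).toReal)
    (hmonoS : ∀ ω, S0 ω ≤ S1 ω) :
    condP μ {ω | Y0 ω = 0 ∧ S0 ω = 1 ∧ S1 ω = 1} {ω | Y1 ω = 1}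
      ≤ min ((condP μ {ω | (fun ω => S1 ω * D ω + S0 ω * (1 - D ω)) ω = 1 ∧ D ω = 1} {ω | (fun ω => (Y1 ω * D ω + Y0 ω * (1 - D ω)) * (S1 ω * D ω + S0 ω * (1 - D ω))) ω = 1}) * (1 / (condP μ {ω | D ω = 0} {ω | (fun ω => S1 ω * D ω + S0 ω * (1 - D ω)) ω = 1} / condP μ {ω | D ω = 1} {ω | (fun ω => S1 ω * D ω + S0 ω * (1 - D ω)) ω = 1})) / (condP μ {ω | (fun ω => S1 ω * D ω + S0 ω * (1 - D ω)) ω = 1 ∧ D ω = 0} {ω | (fun ω => (Y1 ω * D ω + Y0 ω * (1 - D ω)) * (S1 ω * D ω + S0 ω * (1 - D ω))) ω = 0})) 1 := by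
  -- independence helper
  have hprod : ∀ (t : Set (ℝ × ℝ × ℝ × ℝ)), MeasurableSet t → ∀ (c : ℝ),
      μ ((fun ω => (Y0 ω, Y1 ω, S0 ω, S1 ω)) ⁻¹' t ∩ {ω | D ω = c})
        = μ ((fun ω => (Y0 ω, Y1 ω, S0 ω, S1 ω)) ⁻¹' t) * μ {ω | D ω = c} := by
    intro t ht c
    have h := hindep.measure_inter_preimage_eq_mul {c} t (measurableSet_singleton c) ht
    have hpre : D ⁻¹' {c} = {ω | D ω = c} := rfl
    rw [hpre] at h
    rw [Set.inter_comm, h, mul_comm]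
  -- key probabilities
  have m1 : MeasurableSet {x : ℝ × ℝ × ℝ × ℝ | x.2.2.2 = 1} :=
    measurable_snd.snd.snd (measurableSet_singleton (1:ℝ))
  have m2 : MeasurableSet {x : ℝ × ℝ × ℝ × ℝ | x.2.1 = 1 ∧ x.2.2.2 = 1} := by
    rw [Set.setOf_and]
    exact (measurable_snd.fst (measurableSet_singleton (1:ℝ))).inter m1
  have m3 : MeasurableSet {x : ℝ × ℝ × ℝ × ℝ | x.2.2.1 = 1} :=
    measurable_snd.snd.fst (measurableSet_singleton (1:ℝ))
  have m4 : MeasurableSet {x : ℝ × ℝ × ℝ × ℝ | x.1 = 0 ∧ x.2.2.1 = 1} := by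
    rw [Set.setOf_and]
    exact (measurable_fst (measurableSet_singleton (0:ℝ))).inter m3
  have hS1D1 : μ ({ω | S1 ω = 1} ∩ {ω | D ω = 1}) = μ {ω | S1 ω = 1} * μ {ω | D ω = 1} := by
    have := hprod {x : ℝ × ℝ × ℝ × ℝ | x.2.2.2 = 1} m1 1
    simpa [Set.preimage_setOf_eq] using this
  have hY1S1D1 : μ ({ω | Y1 ω = 1 ∧ S1 ω = 1} ∩ {ω | D ω = 1})
      = μ {ω | Y1 ω = 1 ∧ S1 ω = 1} * μ {ω | D ω = 1} := by
    have := hprod {x : ℝ × ℝ × ℝ × ℝ | x.2.1 = 1 ∧ x.2.2.2 = 1} m2 1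
    simpa [Set.preimage_setOf_eq] using this
  have hS0D0 : μ ({ω | S0 ω = 1} ∩ {ω | D ω = 0}) = μ {ω | S0 ω = 1} * μ {ω | D ω = 0} := by
    have := hprod {x : ℝ × ℝ × ℝ × ℝ | x.2.2.1 = 1} m3 0
    simpa [Set.preimage_setOf_eq] using this
  have hY0S0D0 : μ ({ω | Y0 ω = 0 ∧ S0 ω = 1} ∩ {ω | D ω = 0})
      = μ {ω | Y0 ω = 0 ∧ S0 ω = 1} * μ {ω | D ω = 0} := by
    have := hprod {x : ℝ × ℝ × ℝ × ℝ | x.1 = 0 ∧ x.2.2.1 = 1} m4 0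
    simpa [Set.preimage_setOf_eq] using this
  -- abbreviations
  set d1 := (μ {ω | D ω = 1}).toReal with hd1
  set d0 := (μ {ω | D ω = 0}).toReal with hd0
  set s1 := (μ {ω | S1 ω = 1}).toReal with hs1
  set s0 := (μ {ω | S0 ω = 1}).toReal with hs0
  set a := (μ {ω | Y1 ω = 1 ∧ S1 ω = 1}).toReal with ha
  set b := (μ {ω | Y0 ω = 0 ∧ S0 ω = 1}).toReal with hb
  set n := (μ ({ω | Y1 ω = 1} ∩ {ω | Y0 ω = 0 ∧ S0 ω = 1 ∧ S1 ω = 1})).toReal with hn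
  -- d0 > 0
  have hDcompl : {ω | D ω = 0} = {ω | D ω = 1}ᶜ := by
    ext ω; rcases hDb ω with h | h <;> simp [h] <;> norm_num
  have hmsD1 : MeasurableSet {ω | D ω = 1} := hDm (measurableSet_singleton 1)
  have hd0pos : 0 < d0 := by
    rw [hd0, hDcompl, prob_compl_eq_one_sub hmsD1]
    rw [ENNReal.toReal_sub_of_le prob_le_one ENNReal.one_ne_top]
    simp only [ENNReal.toReal_one]
    linarith [hD1]
  -- monotone selection : S0 = 1 → S1 = 1
  have hsub : ∀ ω, S0 ω = 1 → S1 ω = 1 := by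
    intro ω h
    rcases hS1b ω with h1 | h1
    · exfalso; have := hmonoS ω; rw [h, h1] at this; linarith
    · exact h1
  have hAeq : {ω | Y0 ω = 0 ∧ S0 ω = 1 ∧ S1 ω = 1} = {ω | Y0 ω = 0 ∧ S0 ω = 1} := by
    ext ω; constructor
    · rintro ⟨h1, h2, _⟩; exact ⟨h1, h2⟩
    · rintro ⟨h1, h2⟩; exact ⟨h1, h2, hsub ω h2⟩
  have hbpos : 0 < b := by rw [hb, ← hAeq]; exact hposmass
  have hmono_toReal : ∀ {A B : Set Ω}, A ⊆ B → (μ A).toReal ≤ (μ B).toReal := by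
    intro A B h
    exact ENNReal.toReal_mono (measure_ne_top μ B) (measure_mono h)
  have hs0b : b ≤ s0 := hmono_toReal (fun ω h => h.2)
  have hs0pos : 0 < s0 := lt_of_lt_of_le hbpos hs0b
  have hs1s0 : s0 ≤ s1 := hmono_toReal (fun ω h => hsub ω h)
  have hs1pos : 0 < s1 := lt_of_lt_of_le hs0pos hs1s0
  have hna : n ≤ a := hmono_toReal (fun ω h => ⟨h.1, h.2.2.2⟩)
  have hnb : n ≤ b := hmono_toReal (fun ω h => ⟨h.2.1, h.2.2.1⟩)
  -- set equalities for the observed data events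
  have E1 : {ω | S1 ω * D ω + S0 ω * (1 - D ω) = 1 ∧ D ω = 1}
      = {ω | S1 ω = 1} ∩ {ω | D ω = 1} := by
    ext ω; rcases hDb ω with h | h <;> simp [h] <;> norm_num
  have E2 : {ω | (Y1 ω * D ω + Y0 ω * (1 - D ω)) * (S1 ω * D ω + S0 ω * (1 - D ω)) = 1}
      ∩ {ω | S1 ω * D ω + S0 ω * (1 - D ω) = 1 ∧ D ω = 1}
      = {ω | Y1 ω = 1 ∧ S1 ω = 1} ∩ {ω | D ω = 1} := by
    ext ω
    rcases hDb ω with h | h <;> rcases hY1b ω with h1 | h1 <;> rcases hS1b ω with h2 | h2 <;>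
      simp [h, h1, h2] <;> norm_num
  have E3 : {ω | S1 ω * D ω + S0 ω * (1 - D ω) = 1} ∩ {ω | D ω = 0}
      = {ω | S0 ω = 1} ∩ {ω | D ω = 0} := by
    ext ω; rcases hDb ω with h | h <;> simp [h] <;> norm_num
  have E4 : {ω | S1 ω * D ω + S0 ω * (1 - D ω) = 1} ∩ {ω | D ω = 1}
      = {ω | S1 ω = 1} ∩ {ω | D ω = 1} := by
    ext ω; rcases hDb ω with h | h <;> simp [h] <;> norm_num
  have E5 : {ω | S1 ω * D ω + S0 ω * (1 - D ω) = 1 ∧ D ω = 0}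
      = {ω | S0 ω = 1} ∩ {ω | D ω = 0} := by
    ext ω; rcases hDb ω with h | h <;> simp [h] <;> norm_num
  have E6 : {ω | (Y1 ω * D ω + Y0 ω * (1 - D ω)) * (S1 ω * D ω + S0 ω * (1 - D ω)) = 0}
      ∩ {ω | S1 ω * D ω + S0 ω * (1 - D ω) = 1 ∧ D ω = 0}
      = {ω | Y0 ω = 0 ∧ S0 ω = 1} ∩ {ω | D ω = 0} := by
    ext ω
    rcases hDb ω with h | h <;> rcases hY0b ω with h1 | h1 <;> rcases hS0b ω with h2 | h2 <;>
      simp [h, h1, h2] <;> norm_num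
  -- compute the condP values
  beta_reduce
  rw [show condP μ {ω | Y0 ω = 0 ∧ S0 ω = 1 ∧ S1 ω = 1} {ω | Y1 ω = 1} = n / b by
    rw [condP, hAeq, hn, hb]
    congr 2
    rw [← hAeq]]
  have hp1 : condP μ {ω | S1 ω * D ω + S0 ω * (1 - D ω) = 1 ∧ D ω = 1}
      {ω | (Y1 ω * D ω + Y0 ω * (1 - D ω)) * (S1 ω * D ω + S0 ω * (1 - D ω)) = 1}
      = a / s1 := by
    rw [condP, E2, E1, hY1S1D1, hS1D1, ENNReal.toReal_mul, ENNReal.toReal_mul]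
    rw [← ha, ← hs1, ← hd1]
    rw [mul_div_mul_right _ _ (ne_of_gt hD0)]
  have hr0 : condP μ {ω | D ω = 0} {ω | S1 ω * D ω + S0 ω * (1 - D ω) = 1} = s0 := by
    rw [condP, E3, hS0D0, ENNReal.toReal_mul, ← hs0, ← hd0]
    rw [mul_div_assoc, div_self (ne_of_gt hd0pos), mul_one]
  have hr1 : condP μ {ω | D ω = 1} {ω | S1 ω * D ω + S0 ω * (1 - D ω) = 1} = s1 := by
    rw [condP, E4, hS1D1, ENNReal.toReal_mul, ← hs1, ← hd1]
    rw [mul_div_assoc, div_self (ne_of_gt hD0), mul_one]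
  have hp0 : condP μ {ω | S1 ω * D ω + S0 ω * (1 - D ω) = 1 ∧ D ω = 0}
      {ω | (Y1 ω * D ω + Y0 ω * (1 - D ω)) * (S1 ω * D ω + S0 ω * (1 - D ω)) = 0}
      = b / s0 := by
    rw [condP, E6, E5, hY0S0D0, hS0D0, ENNReal.toReal_mul, ENNReal.toReal_mul]
    rw [← hb, ← hs0, ← hd0]
    rw [mul_div_mul_right _ _ (ne_of_gt hd0pos)]
  rw [hp1, hr0, hr1, hp0]
  have hval : a / s1 * (1 / (s0 / s1)) / (b / s0) = a / b := by
    field_simp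
  rw [hval]
  refine le_min ?_ ?_
  · gcongr
  · rw [div_le_one hbpos]; exact hnb
end

section
/- Upper bound UB2 under monotone treatment response: Under random assignment, positive mass (0 < P(D = 1) < 1 and P(Y0 = 0, S0 = 1, S1 = 1) > 0), monotone sample selection (S1 ≥ S0), and monotone treatment response (Y1 ≥ Y0), the parameter θ = P(Y1 = 1 | Y0 = 0, S0 = 1, S1 = 1) satisfies θ ≤ min{ (p1/r + p0 − 1)/p0 , 1 }, where r = P(S = 1 | D = 0)/P(S = 1 | D = 1), p1 = P(Y = 1 | S = 1, D = 1), p0 = P(Y = 0 | S = 1, D = 0), S = S1·D + S0·(1−D), Y = (Y1·D + Y0·(1−D))·S. -/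
open MeasureTheory ProbabilityTheory

theorem stmt11 {Ω : Type*} [MeasurableSpace Ω] (μ : Measure Ω) [IsProbabilityMeasure μ]
    (Y0 Y1 D S0 S1 : Ω → ℝ)
    (hY0m : Measurable Y0) (hY0b : ∀ ω, Y0 ω = 0 ∨ Y0 ω = 1)
    (hY1m : Measurable Y1) (hY1b : ∀ ω, Y1 ω = 0 ∨ Y1 ω = 1)
    (hDm : Measurable D) (hDb : ∀ ω, D ω = 0 ∨ D ω = 1)
    (hS0m : Measurable S0) (hS0b : ∀ ω, S0 ω = 0 ∨ S0 ω = 1)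
    (hS1m : Measurable S1) (hS1b : ∀ ω, S1 ω = 0 ∨ S1 ω = 1)
    (hindep : IndepFun D (fun ω => (Y0 ω, Y1 ω, S0 ω, S1 ω)) μ)
    (hD0 : 0 < (μ {ω | D ω = 1}).toReal) (hD1 : (μ {ω | D ω = 1}).toReal < 1)
    (hposmass : 0 < (μ {ω | Y0 ω = 0 ∧ S0 ω = 1 ∧ S1 ω = 1}).toReal)
    (hmonoS : ∀ ω, S0 ω ≤ S1 ω)
    (hmonoY : ∀ ω, Y0 ω ≤ Y1 ω) :
    condP μ {ω | Y0 ω = 0 ∧ S0 ω = 1 ∧ S1 ω = 1} {ω | Y1 ω = 1}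
      ≤ min (((condP μ {ω | (fun ω => S1 ω * D ω + S0 ω * (1 - D ω)) ω = 1 ∧ D ω = 1} {ω | (fun ω => (Y1 ω * D ω + Y0 ω * (1 - D ω)) * (S1 ω * D ω + S0 ω * (1 - D ω))) ω = 1}) / (condP μ {ω | D ω = 0} {ω | (fun ω => S1 ω * D ω + S0 ω * (1 - D ω)) ω = 1} / condP μ {ω | D ω = 1} {ω | (fun ω => S1 ω * D ω + S0 ω * (1 - D ω)) ω = 1}) + condP μ {ω | (fun ω => S1 ω * D ω + S0 ω * (1 - D ω)) ω = 1 ∧ D ω = 0} {ω | (fun ω => (Y1 ω * D ω + Y0 ω * (1 - D ω)) * (S1 ω * D ω + S0 ω * (1 - D ω))) ω = 0} - 1) / (condP μ {ω | (fun ω => S1 ω * D ω + S0 ω * (1 - D ω)) ω = 1 ∧ D ω = 0} {ω | (fun ω => (Y1 ω * D ω + Y0 ω * (1 - D ω)) * (S1 ω * D ω + S0 ω * (1 - D ω))) ω = 0})) 1 := by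
  classical
  -- pointwise consequences of monotonicity
  have hS01 : ∀ ω, S0 ω = 1 → S1 ω = 1 := by
    intro ω h
    rcases hS1b ω with h1 | h1
    · exfalso; have := hmonoS ω; rw [h, h1] at this; linarith
    · exact h1
  have hY01 : ∀ ω, Y0 ω = 1 → Y1 ω = 1 := by
    intro ω h
    rcases hY1b ω with h1 | h1
    · exfalso; have := hmonoY ω; rw [h, h1] at this; linarith
    · exact h1
  -- basic sets
  set sE1 : Set Ω := {ω | S1 ω = 1} with hsE1
  set sE0 : Set Ω := {ω | S0 ω = 1} with hsE0
  set sQ : Set Ω := {ω | Y1 ω = 1 ∧ S1 ω = 1} with hsQ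
  set sM : Set Ω := {ω | Y0 ω = 0 ∧ S0 ω = 1} with hsM
  set sN : Set Ω := {ω | Y1 ω = 1 ∧ Y0 ω = 0 ∧ S0 ω = 1} with hsN
  set sK : Set Ω := {ω | Y0 ω = 1 ∧ S0 ω = 1} with hsK
  set sD1 : Set Ω := {ω | D ω = 1} with hsD1
  set sD0 : Set Ω := {ω | D ω = 0} with hsD0
  -- independence in toReal form
  have hmul : ∀ (t : Set (ℝ × ℝ × ℝ × ℝ)) (s : Set ℝ), MeasurableSet t → MeasurableSet s →
      (μ ((fun ω => (Y0 ω, Y1 ω, S0 ω, S1 ω)) ⁻¹' t ∩ D ⁻¹' s)).toReal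
        = (μ ((fun ω => (Y0 ω, Y1 ω, S0 ω, S1 ω)) ⁻¹' t)).toReal * (μ (D ⁻¹' s)).toReal := by
    intro t s ht hs
    rw [Set.inter_comm, hindep.measure_inter_preimage_eq_mul s t hs ht, ENNReal.toReal_mul,
      mul_comm]
  -- real quantities
  set a : ℝ := (μ sE1).toReal with ha_def
  set b : ℝ := (μ sE0).toReal with hb_def
  set q : ℝ := (μ sQ).toReal with hq_def
  set m : ℝ := (μ sM).toReal with hm_def
  set n : ℝ := (μ sN).toReal with hn_def
  set k : ℝ := (μ sK).toReal with hk_def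
  set d1 : ℝ := (μ sD1).toReal with hd1_def
  set d0 : ℝ := (μ sD0).toReal with hd0_def
  -- product measure identities
  have mE1D1 : (μ (sE1 ∩ sD1)).toReal = a * d1 :=
    hmul {p | p.2.2.2 = 1} {1} (measurable_snd.snd.snd (measurableSet_singleton 1))
      (measurableSet_singleton 1)
  have mE0D0 : (μ (sE0 ∩ sD0)).toReal = b * d0 :=
    hmul {p | p.2.2.1 = 1} {0} (measurable_snd.snd.fst (measurableSet_singleton 1))
      (measurableSet_singleton 0)
  have mQD1 : (μ (sQ ∩ sD1)).toReal = q * d1 :=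
    hmul {p | p.2.1 = 1 ∧ p.2.2.2 = 1} {1}
      ((measurable_snd.fst (measurableSet_singleton 1)).inter
        (measurable_snd.snd.snd (measurableSet_singleton 1)))
      (measurableSet_singleton 1)
  have mMD0 : (μ (sM ∩ sD0)).toReal = m * d0 :=
    hmul {p | p.1 = 0 ∧ p.2.2.1 = 1} {0}
      ((measurable_fst (measurableSet_singleton 0)).inter
        (measurable_snd.snd.fst (measurableSet_singleton 1)))
      (measurableSet_singleton 0)
  -- d0 = 1 - d1
  have hd0eq : d0 = 1 - d1 := by
    have hset : sD0 = sD1ᶜ := by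
      ext ω; rcases hDb ω with h | h <;> simp [hsD0, hsD1, h]
    have hcompl : μ sD1ᶜ = 1 - μ sD1 := prob_compl_eq_one_sub (hDm (measurableSet_singleton 1))
    rw [hd0_def, hset, hcompl,
      ENNReal.toReal_sub_of_le prob_le_one ENNReal.one_ne_top, ENNReal.toReal_one, hd1_def]
  have hd1pos : 0 < d1 := hD0
  have hd0pos : 0 < d0 := by rw [hd0eq]; linarith
  -- positivity of masses
  have hMeq : {ω | Y0 ω = 0 ∧ S0 ω = 1 ∧ S1 ω = 1} = sM := by
    ext ω
    simp only [hsM, Set.mem_setOf_eq]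
    exact ⟨fun h => ⟨h.1, h.2.1⟩, fun h => ⟨h.1, h.2, hS01 ω h.2⟩⟩
  have hmpos : 0 < m := by rw [hm_def, ← hMeq]; exact hposmass
  have hble : m ≤ b := by
    apply ENNReal.toReal_mono (measure_ne_top μ _)
    exact measure_mono (fun ω h => h.2)
  have hbpos : 0 < b := lt_of_lt_of_le hmpos hble
  have hale : b ≤ a := by
    apply ENNReal.toReal_mono (measure_ne_top μ _)
    exact measure_mono (fun ω h => hS01 ω h)
  have hapos : 0 < a := lt_of_lt_of_le hbpos hale
  -- key measure relations
  have hbmk : b = m + k := by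
    have hunion : sE0 = sM ∪ sK := by
      ext ω
      simp only [hsE0, hsM, hsK, Set.mem_union, Set.mem_setOf_eq]
      rcases hY0b ω with h | h <;> simp [h] <;> tauto
    have hdisj : Disjoint sM sK := by
      rw [Set.disjoint_left]
      intro ω h1 h2
      rw [hsM, Set.mem_setOf_eq] at h1
      rw [hsK, Set.mem_setOf_eq] at h2
      rw [h1.1] at h2; norm_num at h2
    have hKmeas : MeasurableSet sK :=
      (hY0m (measurableSet_singleton 1)).inter (hS0m (measurableSet_singleton 1))
    rw [hb_def, hunion, measure_union hdisj hKmeas, ENNReal.toReal_add (measure_ne_top μ _)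
      (measure_ne_top μ _), hm_def, hk_def]
  have hnkq : n + k ≤ q := by
    have hdisj : Disjoint sN sK := by
      rw [Set.disjoint_left]
      intro ω h1 h2
      rw [hsN, Set.mem_setOf_eq] at h1
      rw [hsK, Set.mem_setOf_eq] at h2
      rw [h1.2.1] at h2; norm_num at h2
    have hKmeas : MeasurableSet sK :=
      (hY0m (measurableSet_singleton 1)).inter (hS0m (measurableSet_singleton 1))
    have hsub : sN ∪ sK ⊆ sQ := by
      intro ω h
      rcases h with h | h
      · exact ⟨h.1, hS01 ω h.2.2⟩
      · exact ⟨hY01 ω h.1, hS01 ω h.2⟩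
    calc n + k = (μ (sN ∪ sK)).toReal := by
          rw [measure_union hdisj hKmeas, ENNReal.toReal_add (measure_ne_top μ _)
            (measure_ne_top μ _), hn_def, hk_def]
      _ ≤ q := ENNReal.toReal_mono (measure_ne_top μ _) (measure_mono hsub)
  have hnm : n ≤ m := by
    apply ENNReal.toReal_mono (measure_ne_top μ _)
    exact measure_mono (fun ω h => ⟨h.2.1, h.2.2⟩)
  -- rewrite the condP expressions
  have eA1 : {ω | (fun ω => S1 ω * D ω + S0 ω * (1 - D ω)) ω = 1 ∧ D ω = 1} = sE1 ∩ sD1 := by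
    ext ω; rcases hDb ω with h | h <;> simp [hsE1, hsD1, h]
  have eA0 : {ω | (fun ω => S1 ω * D ω + S0 ω * (1 - D ω)) ω = 1 ∧ D ω = 0} = sE0 ∩ sD0 := by
    ext ω; rcases hDb ω with h | h <;> simp [hsE0, hsD0, h]
  have eSr1 : {ω | (fun ω => S1 ω * D ω + S0 ω * (1 - D ω)) ω = 1} ∩ sD1 = sE1 ∩ sD1 := by
    ext ω; rcases hDb ω with h | h <;> simp [hsE1, hsD1, h]
  have eSr0 : {ω | (fun ω => S1 ω * D ω + S0 ω * (1 - D ω)) ω = 1} ∩ sD0 = sE0 ∩ sD0 := by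
    ext ω; rcases hDb ω with h | h <;> simp [hsE0, hsD0, h]
  have eY1 : {ω | (fun ω => (Y1 ω * D ω + Y0 ω * (1 - D ω)) * (S1 ω * D ω + S0 ω * (1 - D ω))) ω = 1}
      ∩ (sE1 ∩ sD1) = sQ ∩ sD1 := by
    ext ω
    rcases hDb ω with h | h <;> rcases hY1b ω with h1 | h1 <;> rcases hS1b ω with h2 | h2 <;>
      simp [hsQ, hsE1, hsD1, h, h1, h2]
  have eY0 : {ω | (fun ω => (Y1 ω * D ω + Y0 ω * (1 - D ω)) * (S1 ω * D ω + S0 ω * (1 - D ω))) ω = 0}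
      ∩ (sE0 ∩ sD0) = sM ∩ sD0 := by
    ext ω
    rcases hDb ω with h | h <;> rcases hY0b ω with h1 | h1 <;> rcases hS0b ω with h2 | h2 <;>
      simp [hsM, hsE0, hsD0, h, h1, h2]
  have eN : {ω | Y1 ω = 1} ∩ sM = sN := by
    ext ω
    simp only [hsN, hsM, Set.mem_inter_iff, Set.mem_setOf_eq]
  simp only [condP, eA1, eA0, hMeq]
  rw [eN, eY1, eY0, eSr1, eSr0, mQD1, mE1D1, mMD0, mE0D0, ← hn_def, ← hm_def, ← hd1_def,
    ← hd0_def]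
  -- now pure real arithmetic
  have hRHS : (q * d1 / (a * d1) / (b * d0 / d0 / (a * d1 / d1)) + m * d0 / (b * d0) - 1) /
      (m * d0 / (b * d0)) = (q + m - b) / m := by
    field_simp
  rw [hRHS]
  apply le_min
  · have hkey : n ≤ q + m - b := by linarith
    gcongr
  · rw [div_le_one hmpos]
    exact hnm
end

section
/- Lower bound LB3 under stochastic dominance: Under random assignment, positive mass (0 < P(D = 1) < 1 and P(Y0 = 0, S0 = 1, S1 = 1) > 0), monotone sample selection (S1 ≥ S0), monotone treatment response (Y1 ≥ Y0), and the stochastic dominance condition P(Y1 = 1 | S0 = 1, S1 = 1) ≥ P(Y1 = 1 | S0 = 0, S1 = 1) when P(S0 = 0, S1 = 1) > 0, the parameter θ = P(Y1 = 1 | Y0 = 0, S0 = 1, S1 = 1) satisfies θ ≥ max{ (p1 + p0 − 1)/p0 , 0 }, where p1 = P(Y = 1 | S = 1, D = 1), p0 = P(Y = 0 | S = 1, D = 0), S = S1·D + S0·(1−D), Y = (Y1·D + Y0·(1−D))·S. -/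
open MeasureTheory ProbabilityTheory

lemma arith_lb3 (a b c t u v w : ℝ) (hc : 0 < c) (ha : a = c + w) (hu : u = t + w)
    (hb : 0 ≤ b) (hv : 0 ≤ v) (hvb : v ≤ b) (ht : 0 ≤ t) (hw : 0 ≤ w)
    (hdom : 0 < b → v / b ≤ u / a) :
    ((u + v) / (a + b) + c / a - 1) / (c / a) ⊔ 0 ≤ t / c := by
  have ha0 : 0 < a := by linarith
  rw [max_le_iff]
  refine ⟨?_, by positivity⟩
  have hca : 0 < c / a := div_pos hc ha0
  rw [div_le_iff₀ hca]
  have htc : t / c * (c / a) = t / a := by field_simp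
  rw [htc]
  have key : (u + v) / (a + b) ≤ u / a := by
    rcases eq_or_lt_of_le hb with h | h
    · have hv0 : v = 0 := le_antisymm (by linarith) hv
      rw [← h, hv0, add_zero, add_zero]
    · have h1 := hdom h
      rw [div_le_div_iff₀ h ha0] at h1
      rw [div_le_div_iff₀ (by linarith) ha0]
      nlinarith
  have heq : u / a + c / a - 1 = t / a := by
    field_simp
    linarith [hu, ha]
  linarith

theorem stmt12 {Ω : Type*} [MeasurableSpace Ω] (μ : Measure Ω) [IsProbabilityMeasure μ]
    (Y0 Y1 D S0 S1 : Ω → ℝ)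
    (hY0m : Measurable Y0) (hY0b : ∀ ω, Y0 ω = 0 ∨ Y0 ω = 1)
    (hY1m : Measurable Y1) (hY1b : ∀ ω, Y1 ω = 0 ∨ Y1 ω = 1)
    (hDm : Measurable D) (hDb : ∀ ω, D ω = 0 ∨ D ω = 1)
    (hS0m : Measurable S0) (hS0b : ∀ ω, S0 ω = 0 ∨ S0 ω = 1)
    (hS1m : Measurable S1) (hS1b : ∀ ω, S1 ω = 0 ∨ S1 ω = 1)
    (hindep : IndepFun D (fun ω => (Y0 ω, Y1 ω, S0 ω, S1 ω)) μ)
    (hD0 : 0 < (μ {ω | D ω = 1}).toReal) (hD1 : (μ {ω | D ω = 1}).toReal < 1)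
    (hposmass : 0 < (μ {ω | Y0 ω = 0 ∧ S0 ω = 1 ∧ S1 ω = 1}).toReal)
    (hmonoS : ∀ ω, S0 ω ≤ S1 ω)
    (hmonoY : ∀ ω, Y0 ω ≤ Y1 ω)
    (hdom : 0 < (μ {ω | S0 ω = 0 ∧ S1 ω = 1}).toReal →
      condP μ {ω | S0 ω = 1 ∧ S1 ω = 1} {ω | Y1 ω = 1}
        ≥ condP μ {ω | S0 ω = 0 ∧ S1 ω = 1} {ω | Y1 ω = 1}) :
    condP μ {ω | Y0 ω = 0 ∧ S0 ω = 1 ∧ S1 ω = 1} {ω | Y1 ω = 1}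
      ≥ max ((condP μ {ω | (fun ω => S1 ω * D ω + S0 ω * (1 - D ω)) ω = 1 ∧ D ω = 1} {ω | (fun ω => (Y1 ω * D ω + Y0 ω * (1 - D ω)) * (S1 ω * D ω + S0 ω * (1 - D ω))) ω = 1} + condP μ {ω | (fun ω => S1 ω * D ω + S0 ω * (1 - D ω)) ω = 1 ∧ D ω = 0} {ω | (fun ω => (Y1 ω * D ω + Y0 ω * (1 - D ω)) * (S1 ω * D ω + S0 ω * (1 - D ω))) ω = 0} - 1) / (condP μ {ω | (fun ω => S1 ω * D ω + S0 ω * (1 - D ω)) ω = 1 ∧ D ω = 0} {ω | (fun ω => (Y1 ω * D ω + Y0 ω * (1 - D ω)) * (S1 ω * D ω + S0 ω * (1 - D ω))) ω = 0})) 0 := by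
  -- measurable building blocks
  have mD1 : MeasurableSet {ω | D ω = 1} := hDm (measurableSet_singleton 1)
  have mD0 : MeasurableSet {ω | D ω = 0} := hDm (measurableSet_singleton 0)
  have mS1 : MeasurableSet {ω | S1 ω = 1} := hS1m (measurableSet_singleton 1)
  have mS0 : MeasurableSet {ω | S0 ω = 1} := hS0m (measurableSet_singleton 1)
  have mS0' : MeasurableSet {ω | S0 ω = 0} := hS0m (measurableSet_singleton 0)
  have mY1 : MeasurableSet {ω | Y1 ω = 1} := hY1m (measurableSet_singleton 1)
  have mY0 : MeasurableSet {ω | Y0 ω = 0} := hY0m (measurableSet_singleton 0)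
  have mY01 : MeasurableSet {ω | Y0 ω = 1} := hY0m (measurableSet_singleton 1)
  -- independence helper
  have hind : ∀ (T : Set (ℝ × ℝ × ℝ × ℝ)), MeasurableSet T → ∀ r : ℝ,
      μ ((fun ω => (Y0 ω, Y1 ω, S0 ω, S1 ω)) ⁻¹' T ∩ D ⁻¹' {r})
        = μ ((fun ω => (Y0 ω, Y1 ω, S0 ω, S1 ω)) ⁻¹' T) * μ (D ⁻¹' {r}) := by
    intro T hT r
    rw [Set.inter_comm,
      hindep.measure_inter_preimage_eq_mul {r} T (measurableSet_singleton r) hT, mul_comm]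
  -- key independence facts
  have hS1ind : μ ({ω | S1 ω = 1} ∩ {ω | D ω = 1})
      = μ {ω | S1 ω = 1} * μ {ω | D ω = 1} :=
    hind {x | x.2.2.2 = 1} (measurable_snd.snd.snd (measurableSet_singleton 1)) 1
  have hYS1ind : μ (({ω | Y1 ω = 1} ∩ {ω | S1 ω = 1}) ∩ {ω | D ω = 1})
      = μ ({ω | Y1 ω = 1} ∩ {ω | S1 ω = 1}) * μ {ω | D ω = 1} :=
    hind {x | x.2.1 = 1 ∧ x.2.2.2 = 1}
      ((measurable_snd.fst (measurableSet_singleton 1)).inter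
        (measurable_snd.snd.snd (measurableSet_singleton 1))) 1
  have hS0ind : μ ({ω | S0 ω = 1} ∩ {ω | D ω = 0})
      = μ {ω | S0 ω = 1} * μ {ω | D ω = 0} :=
    hind {x | x.2.2.1 = 1} (measurable_snd.snd.fst (measurableSet_singleton 1)) 0
  have hYS0ind : μ (({ω | Y0 ω = 0} ∩ {ω | S0 ω = 1}) ∩ {ω | D ω = 0})
      = μ ({ω | Y0 ω = 0} ∩ {ω | S0 ω = 1}) * μ {ω | D ω = 0} :=
    hind {x | x.1 = 0 ∧ x.2.2.1 = 1}
      ((measurable_fst (measurableSet_singleton 0)).inter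
        (measurable_snd.snd.fst (measurableSet_singleton 1))) 0
  -- set identities in the goal
  have e1 : {ω | (fun ω => S1 ω * D ω + S0 ω * (1 - D ω)) ω = 1 ∧ D ω = 1}
      = {ω | S1 ω = 1} ∩ {ω | D ω = 1} := by
    ext ω
    simp only [Set.mem_setOf_eq, Set.mem_inter_iff]
    rcases hDb ω with h | h <;> simp [h]
  have e2 : {ω | (fun ω => (Y1 ω * D ω + Y0 ω * (1 - D ω)) * (S1 ω * D ω + S0 ω * (1 - D ω))) ω = 1}
      ∩ {ω | (fun ω => S1 ω * D ω + S0 ω * (1 - D ω)) ω = 1 ∧ D ω = 1}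
      = ({ω | Y1 ω = 1} ∩ {ω | S1 ω = 1}) ∩ {ω | D ω = 1} := by
    ext ω
    simp only [Set.mem_setOf_eq, Set.mem_inter_iff]
    rcases hDb ω with h | h
    · simp [h]
    · rcases hY1b ω with h1 | h1 <;> rcases hS1b ω with h2 | h2 <;> simp [h, h1, h2]
  have e3 : {ω | (fun ω => S1 ω * D ω + S0 ω * (1 - D ω)) ω = 1 ∧ D ω = 0}
      = {ω | S0 ω = 1} ∩ {ω | D ω = 0} := by
    ext ω
    simp only [Set.mem_setOf_eq, Set.mem_inter_iff]
    rcases hDb ω with h | h <;> simp [h]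
  have e4 : {ω | (fun ω => (Y1 ω * D ω + Y0 ω * (1 - D ω)) * (S1 ω * D ω + S0 ω * (1 - D ω))) ω = 0}
      ∩ {ω | (fun ω => S1 ω * D ω + S0 ω * (1 - D ω)) ω = 1 ∧ D ω = 0}
      = ({ω | Y0 ω = 0} ∩ {ω | S0 ω = 1}) ∩ {ω | D ω = 0} := by
    ext ω
    simp only [Set.mem_setOf_eq, Set.mem_inter_iff]
    rcases hDb ω with h | h
    · rcases hY0b ω with h1 | h1 <;> rcases hS0b ω with h2 | h2 <;> simp [h, h1, h2]
    · simp [h]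
  -- S0 = 1 implies S1 = 1
  have hS01 : ∀ ω, S0 ω = 1 → S1 ω = 1 := by
    intro ω h
    rcases hS1b ω with h1 | h1
    · exfalso; have := hmonoS ω; rw [h, h1] at this; linarith
    · exact h1
  have hY01 : ∀ ω, Y0 ω = 1 → Y1 ω = 1 := by
    intro ω h
    rcases hY1b ω with h1 | h1
    · exfalso; have := hmonoY ω; rw [h, h1] at this; linarith
    · exact h1
  have eA : {ω | S0 ω = 1 ∧ S1 ω = 1} = {ω | S0 ω = 1} := by
    ext ω; simp only [Set.mem_setOf_eq]
    exact ⟨fun h => h.1, fun h => ⟨h, hS01 ω h⟩⟩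
  have eC : {ω | Y0 ω = 0 ∧ S0 ω = 1 ∧ S1 ω = 1} = {ω | Y0 ω = 0} ∩ {ω | S0 ω = 1} := by
    ext ω; simp only [Set.mem_setOf_eq, Set.mem_inter_iff]
    exact ⟨fun h => ⟨h.1, h.2.1⟩, fun h => ⟨h.1, h.2, hS01 ω h.2⟩⟩
  -- real abbreviations
  set a : ℝ := (μ {ω | S0 ω = 1}).toReal with ha_def
  set b : ℝ := (μ {ω | S0 ω = 0 ∧ S1 ω = 1}).toReal with hb_def
  set c : ℝ := (μ ({ω | Y0 ω = 0} ∩ {ω | S0 ω = 1})).toReal with hc_def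
  set t : ℝ := (μ ({ω | Y1 ω = 1} ∩ ({ω | Y0 ω = 0} ∩ {ω | S0 ω = 1}))).toReal with ht_def
  set u : ℝ := (μ ({ω | Y1 ω = 1} ∩ {ω | S0 ω = 1})).toReal with hu_def
  set v : ℝ := (μ ({ω | Y1 ω = 1} ∩ {ω | S0 ω = 0 ∧ S1 ω = 1})).toReal with hv_def
  set w : ℝ := (μ ({ω | Y0 ω = 1} ∩ {ω | S0 ω = 1})).toReal with hw_def
  set d : ℝ := (μ {ω | D ω = 1}).toReal with hd_def
  set d' : ℝ := (μ {ω | D ω = 0}).toReal with hd'_def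
  -- positivity of c
  have hc : 0 < c := by rwa [eC] at hposmass
  -- d' > 0
  have hDcompl : {ω | D ω = 0} = {ω | D ω = 1}ᶜ := by
    ext ω; simp only [Set.mem_setOf_eq, Set.mem_compl_iff]
    rcases hDb ω with h | h <;> simp [h]
  have hd' : 0 < d' := by
    rw [hd'_def, hDcompl, measure_compl mD1 (measure_ne_top μ _), measure_univ,
      ENNReal.toReal_sub_of_le prob_le_one ENNReal.one_ne_top, ENNReal.toReal_one]
    linarith
  have mB : MeasurableSet {ω | S0 ω = 0 ∧ S1 ω = 1} := mS0'.inter mS1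
  -- a = c + w
  have haw : a = c + w := by
    have hset : {ω | S0 ω = 1}
        = ({ω | Y0 ω = 0} ∩ {ω | S0 ω = 1}) ∪ ({ω | Y0 ω = 1} ∩ {ω | S0 ω = 1}) := by
      ext ω
      simp only [Set.mem_setOf_eq, Set.mem_union, Set.mem_inter_iff]
      rcases hY0b ω with h | h <;> simp [h]
    have hdisj : Disjoint ({ω | Y0 ω = 0} ∩ {ω | S0 ω = 1}) ({ω | Y0 ω = 1} ∩ {ω | S0 ω = 1}) :=
      Set.disjoint_left.mpr (fun ω h1 h2 => by
        simp only [Set.mem_inter_iff, Set.mem_setOf_eq] at h1 h2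
        rw [h1.1] at h2; exact one_ne_zero h2.1.symm)
    rw [ha_def, hset, measure_union hdisj (mY01.inter mS0),
      ENNReal.toReal_add (measure_ne_top μ _) (measure_ne_top μ _)]
  -- u = t + w
  have huw : u = t + w := by
    have hset : {ω | Y1 ω = 1} ∩ {ω | S0 ω = 1}
        = ({ω | Y1 ω = 1} ∩ ({ω | Y0 ω = 0} ∩ {ω | S0 ω = 1})) ∪ ({ω | Y0 ω = 1} ∩ {ω | S0 ω = 1}) := by
      ext ω
      simp only [Set.mem_setOf_eq, Set.mem_union, Set.mem_inter_iff]
      rcases hY0b ω with h | h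
      · simp [h]
      · simp [h, hY01 ω h]
    have hdisj : Disjoint ({ω | Y1 ω = 1} ∩ ({ω | Y0 ω = 0} ∩ {ω | S0 ω = 1}))
        ({ω | Y0 ω = 1} ∩ {ω | S0 ω = 1}) :=
      Set.disjoint_left.mpr (fun ω h1 h2 => by
        simp only [Set.mem_inter_iff, Set.mem_setOf_eq] at h1 h2
        rw [h2.1] at h1; exact one_ne_zero h1.2.1)
    rw [hu_def, hset, measure_union hdisj (mY01.inter mS0),
      ENNReal.toReal_add (measure_ne_top μ _) (measure_ne_top μ _)]
  -- S1 = 1 split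
  have hsplit : (μ {ω | S1 ω = 1}).toReal = a + b := by
    have hset : {ω | S1 ω = 1} = {ω | S0 ω = 1} ∪ {ω | S0 ω = 0 ∧ S1 ω = 1} := by
      ext ω
      simp only [Set.mem_setOf_eq, Set.mem_union]
      rcases hS0b ω with h | h
      · simp [h]
      · simp [h, hS01 ω h]
    have hdisj : Disjoint {ω | S0 ω = 1} {ω | S0 ω = 0 ∧ S1 ω = 1} :=
      Set.disjoint_left.mpr (fun ω h1 h2 => by
        simp only [Set.mem_setOf_eq] at h1 h2
        rw [h1] at h2; exact one_ne_zero h2.1)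
    rw [hset, measure_union hdisj mB,
      ENNReal.toReal_add (measure_ne_top μ _) (measure_ne_top μ _)]
  -- Y1=1 ∩ S1=1 split
  have hsplitY : (μ ({ω | Y1 ω = 1} ∩ {ω | S1 ω = 1})).toReal = u + v := by
    have hset : {ω | Y1 ω = 1} ∩ {ω | S1 ω = 1}
        = ({ω | Y1 ω = 1} ∩ {ω | S0 ω = 1}) ∪ ({ω | Y1 ω = 1} ∩ {ω | S0 ω = 0 ∧ S1 ω = 1}) := by
      ext ω
      simp only [Set.mem_setOf_eq, Set.mem_union, Set.mem_inter_iff]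
      rcases hS0b ω with h | h
      · simp [h]
      · simp [h, hS01 ω h]
    have hdisj : Disjoint ({ω | Y1 ω = 1} ∩ {ω | S0 ω = 1})
        ({ω | Y1 ω = 1} ∩ {ω | S0 ω = 0 ∧ S1 ω = 1}) :=
      Set.disjoint_left.mpr (fun ω h1 h2 => by
        simp only [Set.mem_inter_iff, Set.mem_setOf_eq] at h1 h2
        rw [h1.2] at h2; exact one_ne_zero h2.2.1)
    rw [hset, measure_union hdisj (mY1.inter mB),
      ENNReal.toReal_add (measure_ne_top μ _) (measure_ne_top μ _)]
  -- compute condP's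
  have preD1 : D ⁻¹' {(1:ℝ)} = {ω | D ω = 1} := rfl
  have preD0 : D ⁻¹' {(0:ℝ)} = {ω | D ω = 0} := rfl
  have hp1 : condP μ {ω | (fun ω => S1 ω * D ω + S0 ω * (1 - D ω)) ω = 1 ∧ D ω = 1}
      {ω | (fun ω => (Y1 ω * D ω + Y0 ω * (1 - D ω)) * (S1 ω * D ω + S0 ω * (1 - D ω))) ω = 1}
      = (u + v) / (a + b) := by
    rw [condP, e2, e1, hYS1ind, hS1ind, ENNReal.toReal_mul, ENNReal.toReal_mul, hsplitY, hsplit,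
      mul_div_mul_right _ _ (ne_of_gt hD0)]
  have hp0 : condP μ {ω | (fun ω => S1 ω * D ω + S0 ω * (1 - D ω)) ω = 1 ∧ D ω = 0}
      {ω | (fun ω => (Y1 ω * D ω + Y0 ω * (1 - D ω)) * (S1 ω * D ω + S0 ω * (1 - D ω))) ω = 0}
      = c / a := by
    rw [condP, e4, e3, hYS0ind, hS0ind, ENNReal.toReal_mul, ENNReal.toReal_mul,
      mul_div_mul_right _ _ (ne_of_gt hd')]
  have hth : condP μ {ω | Y0 ω = 0 ∧ S0 ω = 1 ∧ S1 ω = 1} {ω | Y1 ω = 1} = t / c := by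
    rw [condP, eC]
  rw [hp1, hp0, hth, ge_iff_le]
  -- dominance in terms of u, v, a, b
  have hdom' : 0 < b → v / b ≤ u / a := by
    intro hb
    have := hdom hb
    rw [ge_iff_le, condP, condP, eA] at this
    exact this
  exact arith_lb3 a b c t u v w hc haw huw ENNReal.toReal_nonneg ENNReal.toReal_nonneg
    (ENNReal.toReal_mono (measure_ne_top μ _) (measure_mono Set.inter_subset_right))
    ENNReal.toReal_nonneg ENNReal.toReal_nonneg hdom'
end

section
/- Ordering of the bounds with and without monotone treatment response: For real numbers p1, p0, r with 0 < r ≤ 1 and 0 < p0 ≤ 1 and 0 ≤ p1 ≤ 1, the upper bound UB2 = min{(p1/r + p0 − 1)/p0, 1} is less than or equal to UB1 = min{(p1/r)/p0, 1}, and LB3 = max{(p1 + p0 − 1)/p0, 0} is greater than or equal to LB1 = max{((p1 − (1 − r))/r + p0 − 1)/p0, 0}. -/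
theorem stmt14 (p1 p0 r : ℝ) (hr0 : 0 < r) (hr1 : r ≤ 1)
    (hp00 : 0 < p0) (hp01 : p0 ≤ 1) (hp10 : 0 ≤ p1) (hp11 : p1 ≤ 1) :
    min ((p1 / r + p0 - 1) / p0) 1 ≤ min ((p1 / r) / p0) 1
    ∧ max (((p1 - (1 - r)) / r + p0 - 1) / p0) 0 ≤ max ((p1 + p0 - 1) / p0) 0 := by
  have h : (p1 - (1 - r)) / r ≤ p1 := by
    rw [div_le_iff₀ hr0]; nlinarith
  constructor
  · apply min_le_min _ le_rfl
    gcongr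
    linarith
  · apply max_le_max _ le_rfl
    gcongr
end
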